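/- arXiv:0812.1468 — 7 statements merged into one kernel-verified Lean document; each statement's English description precedes it below -/
import Mathlib

section
/- Let {A, G, σ, α} be a crossed system over a monoid G. An element x = Σ_{s∈G} a_s u_s of the crossed product A ⋊_α^σ G lies in the center of A ⋊_α^σ G if and only if (i) a_s σ_s(a) = a a_s for all s ∈ G and a ∈ A, and (ii) for all t, r ∈ G, Σ_{s : st = r} a_s α(s,t) = Σ_{s : ts = r} σ_t(a_s) α(t,s). -/
/-!
Since `crossedMul` is additive in each argument, `x` is central iff it commutes with every
monomial `b u_t`. By the normalisation of `σ` and `α`, commuting with `a u_1` is condition (i),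
and evaluating the coefficients of `x u_t = u_t x` gives condition (ii). Conversely, (i) lets `b`
be pulled out to the left of `x (b u_t)`, so `x (b u_t) = b (x u_t) = b (u_t x) = (b u_t) x`.
-/

/-- The multiplication of the crossed product `A ⋊_α^σ G` of a monoid crossed
system, on finitely supported formal sums `G →₀ A`:
`(a u_s)(b u_t) = a σ_s(b) α(s,t) u_{st}`. -/
noncomputable def crossedMul {A : Type*} [Ring A] {G : Type*} [Monoid G]
    (σ : G → (A →+* A)) (α : G → G → A) (x y : G →₀ A) : G →₀ A :=
  x.sum fun s a => y.sum fun t b => Finsupp.single (s * t) (a * σ s b * α s t)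

theorem Finsupp.sum_single_apply_eq_finsum {M ι κ : Type*} [AddCommMonoid M] (x : ι →₀ M)
    {g : ι → M → M} (hg : ∀ i, g i 0 = 0) (f : ι → κ) (k : κ) :
    (x.sum fun i m => single (f i) (g i m)) k = ∑ᶠ (i) (_ : f i = k), g i (x i) := by
  classical
  have hsupp : (Function.support fun i => ∑ᶠ (_ : f i = k), g i (x i)) ⊆ x.support := by
    intro i hi
    contrapose! hi
    simp [notMem_support_iff.mp hi, hg]
  rw [sum_apply, finsum_eq_sum_of_support_subset _ hsupp]
  refine Finset.sum_congr rfl fun i _ => ?_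
  simp only [single_apply, finsum_eq_if]

section

variable {A : Type*} [Ring A] {G : Type*} [Monoid G] (σ : G → (A →+* A)) (α : G → G → A)

theorem crossedMul_add_right (x y z : G →₀ A) :
    crossedMul σ α x (y + z) = crossedMul σ α x y + crossedMul σ α x z := by
  unfold crossedMul
  rw [← Finsupp.sum_add]
  refine Finsupp.sum_congr fun s _ => ?_
  rw [Finsupp.sum_add_index'] <;> simp [mul_add, add_mul, Finsupp.single_add]

theorem crossedMul_add_left (x y z : G →₀ A) :
    crossedMul σ α (x + y) z = crossedMul σ α x z + crossedMul σ α y z := by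
  unfold crossedMul
  rw [Finsupp.sum_add_index'] <;> simp [add_mul, Finsupp.single_add, ← Finsupp.sum_add]

theorem crossedMul_single_right (x : G →₀ A) (t : G) (b : A) :
    crossedMul σ α x (Finsupp.single t b) =
      x.sum fun s a => Finsupp.single (s * t) (a * σ s b * α s t) := by
  simp [crossedMul]

theorem crossedMul_single_left (y : G →₀ A) (t : G) (b : A) :
    crossedMul σ α (Finsupp.single t b) y =
      y.sum fun s a => Finsupp.single (t * s) (b * σ t a * α t s) := by
  simp [crossedMul]

theorem crossedMul_single_right_apply (x : G →₀ A) (t : G) (b : A) (r : G) :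
    crossedMul σ α x (Finsupp.single t b) r = ∑ᶠ (s) (_ : s * t = r), x s * σ s b * α s t := by
  rw [crossedMul_single_right, Finsupp.sum_single_apply_eq_finsum _ (by simp)]

theorem crossedMul_single_left_apply (y : G →₀ A) (t : G) (b : A) (r : G) :
    crossedMul σ α (Finsupp.single t b) y r = ∑ᶠ (s) (_ : t * s = r), b * σ t (y s) * α t s := by
  rw [crossedMul_single_left, Finsupp.sum_single_apply_eq_finsum _ (by simp)]

theorem crossedMul_single_left_eq_smul (y : G →₀ A) (t : G) (b : A) :
    crossedMul σ α (Finsupp.single t b) y = b • crossedMul σ α (Finsupp.single t 1) y := by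
  simp only [crossedMul_single_left, Finsupp.smul_sum, Finsupp.smul_single, smul_eq_mul, one_mul,
    mul_assoc]

theorem crossedMul_single_right_eq_smul {x : G →₀ A} (hx : ∀ s a, x s * σ s a = a * x s)
    (t : G) (b : A) :
    crossedMul σ α x (Finsupp.single t b) = b • crossedMul σ α x (Finsupp.single t 1) := by
  simp only [crossedMul_single_right, Finsupp.smul_sum, Finsupp.smul_single, smul_eq_mul, map_one,
    mul_one]
  refine Finsupp.sum_congr fun s _ => ?_
  rw [hx, mul_assoc]

theorem forall_crossedMul_comm_iff_single (x : G →₀ A) :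
    (∀ y, crossedMul σ α x y = crossedMul σ α y x) ↔
      ∀ t b, crossedMul σ α x (Finsupp.single t b) = crossedMul σ α (Finsupp.single t b) x := by
  refine ⟨fun h t b => h _, fun h y => ?_⟩
  let L : (G →₀ A) →+ (G →₀ A) :=
    AddMonoidHom.mk' (crossedMul σ α x) (crossedMul_add_right σ α x)
  let R : (G →₀ A) →+ (G →₀ A) :=
    AddMonoidHom.mk' (fun y => crossedMul σ α y x) fun y z => crossedMul_add_left σ α y z x
  exact DFunLike.congr_fun (Finsupp.addHom_ext h : L = R) y

end

theorem center_monoid_crossed_product_general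
    {A : Type*} [Ring A] {G : Type*} [Monoid G]
    (σ : G → (A →+* A)) (α : G → G → A)
    (hσ1 : σ 1 = RingHom.id A)
    (hα1r : ∀ s, α s 1 = 1) (hα1l : ∀ s, α 1 s = 1)
    (x : G →₀ A) :
    (∀ y, crossedMul σ α x y = crossedMul σ α y x) ↔
      ((∀ s a, x s * σ s a = a * x s) ∧
        ∀ t r, (∑ᶠ (s : G) (_ : s * t = r), x s * α s t)
          = ∑ᶠ (s : G) (_ : t * s = r), σ t (x s) * α t s) := by
  have unit_comm_iff (t : G) : crossedMul σ α x (Finsupp.single t 1) =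
      crossedMul σ α (Finsupp.single t 1) x ↔ ∀ r, (∑ᶠ (s : G) (_ : s * t = r), x s * α s t)
          = ∑ᶠ (s : G) (_ : t * s = r), σ t (x s) * α t s := by
    simp only [Finsupp.ext_iff, crossedMul_single_right_apply, crossedMul_single_left_apply,
      map_one, mul_one, one_mul]
  rw [forall_crossedMul_comm_iff_single]
  refine ⟨fun h => ⟨fun s a => ?_, fun t => (unit_comm_iff t).1 (h t 1)⟩,
    fun ⟨hx, hunit⟩ t b => ?_⟩
  · simpa [crossedMul_single_right_apply, crossedMul_single_left_apply, hσ1, hα1r, hα1l]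
      using DFunLike.congr_fun (h 1 a) s
  · rw [crossedMul_single_right_eq_smul σ α hx, crossedMul_single_left_eq_smul,
      (unit_comm_iff t).2 (hunit t)]

/-- an element `x = Σ a_s u_s` of a monoid crossed product is central
iff (i) `a_s σ_s(a) = a a_s` for all `s, a` and (ii) for all `t, r`,
`Σ_{st=r} a_s α(s,t) = Σ_{ts=r} σ_t(a_s) α(t,s)`. -/
theorem center_monoid_crossed_product
    {A : Type*} [Ring A] {G : Type*} [Monoid G]
    (σ : G → (A →+* A)) (α : G → G → A)
    (hσ1 : σ 1 = RingHom.id A)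
    (hα1r : ∀ s, α s 1 = 1) (hα1l : ∀ s, α 1 s = 1)
    (hcoc : ∀ s t r, α s t * α (s * t) r = σ s (α t r) * α s (t * r))
    (htw : ∀ s t a, σ s (σ t a) * α s t = α s t * σ (s * t) a)
    (x : G →₀ A) :
    (∀ y, crossedMul σ α x y = crossedMul σ α y x) ↔
      ((∀ s a, x s * σ s a = a * x s) ∧
        ∀ t r, (∑ᶠ (s : G) (_ : s * t = r), x s * α s t)
          = ∑ᶠ (s : G) (_ : t * s = r), σ t (x s) * α t s) :=
  center_monoid_crossed_product_general σ α hσ1 hα1r hα1l x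
end

section
/- Let A ⋊^σ G be a skew monoid ring (all α(s,t) = 1) where G is an abelian cancellable monoid. Then Σ_{s∈G} a_s u_s is central if and only if a_s σ_s(a) = a a_s for all s ∈ G and a ∈ A, and each a_s lies in A^G. -/
/-!
Comparing the coefficients of `u_{st}` in `x (b u_t)` and `(b u_t) x` (by cancellation and
commutativity only the term `a_s u_s` of `x` contributes to either) shows that a central `x`
satisfies `a_s σ_s(b) = b σ_t(a_s)` for all `s, t, b`; conversely, this identity makes the double
sums defining `x y` and `y x` agree term by term. Taking `b = 1` gives `σ_t(a_s) = a_s`, after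
which `t` drops out of the identity.
-/

/-- The multiplication of a skew monoid ring `A ⋊^σ G` (all `α(s,t) = 1`) on
finitely supported formal sums: `(a u_s)(b u_t) = a σ_s(b) u_{st}`. -/
noncomputable def skewMul {A : Type*} [Ring A] {G : Type*} [Monoid G]
    (σ : G → (A →+* A)) (x y : G →₀ A) : G →₀ A :=
  x.sum fun s a => y.sum fun t b => Finsupp.single (s * t) (a * σ s b)

lemma Finsupp.sum_single_apply_of_injective {α β M N : Type*} [Zero M] [AddCommMonoid N]
    {g : α → β} (hg : Function.Injective g) (x : α →₀ M) (F : α → M → N)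
    (hF : ∀ a, F a 0 = 0) (a : α) :
    (x.sum fun a' m => Finsupp.single (g a') (F a' m)) (g a) = F a (x a) := by
  rw [Finsupp.sum_apply, Finsupp.sum_eq_single a]
  · exact Finsupp.single_eq_same
  · intro a' _ ha'
    exact Finsupp.single_eq_of_ne (hg.ne ha'.symm)
  · intro _
    rw [hF, Finsupp.single_zero, Finsupp.zero_apply]

section Monoid

variable {A : Type*} [Ring A] {G : Type*} [Monoid G] (σ : G → (A →+* A))

lemma skewMul_single_right (x : G →₀ A) (t : G) (b : A) :
    skewMul σ x (Finsupp.single t b) =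
      x.sum fun s a => Finsupp.single (s * t) (a * σ s b) := by
  unfold skewMul
  refine Finsupp.sum_congr fun s _ => ?_
  simp [Finsupp.sum_single_index]

lemma skewMul_single_left (x : G →₀ A) (t : G) (b : A) :
    skewMul σ (Finsupp.single t b) x =
      x.sum fun s a => Finsupp.single (t * s) (b * σ t a) := by
  unfold skewMul
  simp [Finsupp.sum_single_index]

lemma skewMul_single_right_apply_mul [IsRightCancelMul G] (x : G →₀ A) (s t : G) (b : A) :
    skewMul σ x (Finsupp.single t b) (s * t) = x s * σ s b := by
  rw [skewMul_single_right]
  exact Finsupp.sum_single_apply_of_injective (mul_left_injective t) x _ (by simp) s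

lemma skewMul_single_left_apply_mul [IsLeftCancelMul G] (x : G →₀ A) (s t : G) (b : A) :
    skewMul σ (Finsupp.single t b) x (t * s) = b * σ t (x s) := by
  rw [skewMul_single_left]
  exact Finsupp.sum_single_apply_of_injective (mul_right_injective t) x _ (by simp) s

end Monoid

lemma skewMul_comm_iff {A : Type*} [Ring A] {G : Type*} [CommMonoid G] [IsCancelMul G]
    (σ : G → (A →+* A)) (x : G →₀ A) :
    (∀ y, skewMul σ x y = skewMul σ y x) ↔ ∀ s t b, x s * σ s b = b * σ t (x s) := by
  constructor
  · intro h s t b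
    have h_coeff := DFunLike.congr_fun (h (Finsupp.single t b)) (s * t)
    rwa [skewMul_single_right_apply_mul, mul_comm s t, skewMul_single_left_apply_mul] at h_coeff
  · intro h y
    unfold skewMul
    rw [Finsupp.sum_comm]
    refine Finsupp.sum_congr fun t _ => Finsupp.sum_congr fun s _ => ?_
    rw [mul_comm s t, h s t]

theorem center_skew_monoid_ring_general
    {A : Type*} [Ring A] {G : Type*} [CommMonoid G] [IsCancelMul G]
    (σ : G → (A →+* A))
    (x : G →₀ A) :
    (∀ y, skewMul σ x y = skewMul σ y x) ↔
      ((∀ s a, x s * σ s a = a * x s) ∧ ∀ s t, σ t (x s) = x s) := by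
  rw [skewMul_comm_iff]
  constructor
  · intro h
    have h_fixed : ∀ s t, σ t (x s) = x s := fun s t => by
      simpa using (h s t 1).symm
    exact ⟨fun s a => by simpa [h_fixed] using h s 1 a, h_fixed⟩
  · rintro ⟨h_comm, h_fixed⟩ s t a
    rw [h_fixed, h_comm]

/-- in a skew monoid ring `A ⋊^σ G` over an abelian cancellable
monoid `G`, an element `Σ a_s u_s` is central iff `a_s σ_s(a) = a a_s` for all
`s, a` and every `a_s` lies in `A^G`. -/
theorem center_skew_monoid_ring
    {A : Type*} [Ring A] {G : Type*} [CommMonoid G] [IsCancelMul G]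
    (σ : G → (A →+* A))
    (hσ1 : σ 1 = RingHom.id A)
    (hσmul : ∀ s t, σ (s * t) = (σ s).comp (σ t))
    (x : G →₀ A) :
    (∀ y, skewMul σ x y = skewMul σ y x) ↔
      ((∀ s a, x s * σ s a = a * x s) ∧ ∀ s t, σ t (x s) = x s) :=
  center_skew_monoid_ring_general σ x
end

section
/- Let A ⋊_α^σ G be a category crossed product over a small category G with finitely many objects. If all α(s,t) are nonzero and A ⋊_α^σ G is commutative, then: (ii) G is the disjoint union of the endomorphism monoids G_e, e ∈ ob(G) (i.e. every morphism s satisfies d(s) = c(s)), and each G_e is abelian; (iii) each σ_s with d(s) = c(s) = e is the identity on A_e; (iv) A = ⊕_e A_e is commutative; (v) α is symmetric, i.e. α(s,t) = α(t,s) whenever d(s)=c(s)=d(t)=c(t). -/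
open CategoryTheory

/-- The type of morphisms of a category `G`, bundled with domain and codomain. -/
abbrev CMor (G : Type*) [Category G] := Σ e f : G, e ⟶ f

/-- Transport along an equality of objects, as a ring homomorphism. -/
def castRH {G : Type*} (A : G → Type*) [∀ e, Ring (A e)]
    {e f : G} (h : e = f) : A e →+* A f := by subst h; exact RingHom.id _

/-- The carrier of the category crossed product `A ⋊_α^σ G`: finitely supported
formal sums `Σ_s a_s u_s` with `a_s ∈ A_{c(s)}`. -/
abbrev CP {G : Type*} [Category G] (A : G → Type*) [∀ e, Ring (A e)] :=
  Π₀ p : CMor G, A p.2.1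

open Classical in
/-- The multiplication of the category crossed product:
`(a u_s)(b u_t) = a σ_s(b) α(s,t) u_{st}` when `d(s) = c(t)`, else `0`. -/
noncomputable def catMul {G : Type*} [Category G] {A : G → Type*} [∀ e, Ring (A e)]
    (σ : ∀ e f : G, (e ⟶ f) → (A e →+* A f))
    (α : ∀ e f g : G, (f ⟶ g) → (e ⟶ f) → A g)
    (x y : CP A) : CP A :=
  x.sum fun p a => y.sum fun q b =>
    if h : q.2.1 = p.1 then
      DFinsupp.single (⟨q.1, p.2.1, (q.2.2 ≫ eqToHom h) ≫ p.2.2⟩ : CMor G)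
        (a * σ p.1 p.2.1 p.2.2 (castRH A h b) * α q.1 p.1 p.2.1 p.2.2 (q.2.2 ≫ eqToHom h))
    else 0

open Classical in
/-- `a u_s`, the formal sum supported on a single morphism. -/
noncomputable def catSingle {G : Type*} [Category G] {A : G → Type*} [∀ e, Ring (A e)]
    (p : CMor G) (a : A p.2.1) : CP A := DFinsupp.single p a

/-! Compare products of monomials `a u_s` inside the commutative crossed product.
For `s : e ⟶ f`, the product `u_s u_{1_e}` is the nonzero monomial `α(s, 1_e) u_s`, while
`u_{1_e} u_s` vanishes unless `f = e`; so every morphism is an endomorphism. For endomorphisms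
`s, t` of `e`, comparing `u_s u_t = α(s,t) u_{ts}` with `u_t u_s = α(t,s) u_{st}` gives `st = ts`,
after which the coefficients of `(a u_s)(b u_t)` and `(b u_t)(a u_s)` agree:
`a σ_s(b) α(s,t) = b σ_t(a) α(t,s)`. Specialising `a`, `b`, `s`, `t` to `1` yields (iii)–(v). -/

lemma castRH_rfl {G : Type*} (A : G → Type*) [∀ e, Ring (A e)] (e : G) :
    castRH A (rfl : e = e) = RingHom.id (A e) := rfl

section CrossedProduct

variable {G : Type*} [Category G] {A : G → Type*} [∀ e, Ring (A e)]
  (σ : ∀ e f : G, (e ⟶ f) → (A e →+* A f))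
  (α : ∀ e f g : G, (f ⟶ g) → (e ⟶ f) → A g)

open Classical in
lemma catMul_catSingle (p q : CMor G) (a : A p.2.1) (b : A q.2.1) :
    catMul σ α (catSingle p a) (catSingle q b) =
      if h : q.2.1 = p.1 then
        DFinsupp.single (⟨q.1, p.2.1, (q.2.2 ≫ eqToHom h) ≫ p.2.2⟩ : CMor G)
          (a * σ p.1 p.2.1 p.2.2 (castRH A h b) * α q.1 p.1 p.2.1 p.2.2 (q.2.2 ≫ eqToHom h))
      else 0 := by
  unfold catMul catSingle
  rw [DFinsupp.sum_single_index, DFinsupp.sum_single_index]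
  · split <;> simp
  · simp [DFinsupp.sum]

lemma catMul_catSingle_of_ne (p q : CMor G) (a : A p.2.1) (b : A q.2.1) (h : q.2.1 ≠ p.1) :
    catMul σ α (catSingle p a) (catSingle q b) = 0 := by
  rw [catMul_catSingle, dif_neg h]

lemma catMul_catSingle_comp {e f g : G} (s : f ⟶ g) (t : e ⟶ f) (a : A g) (b : A f) :
    catMul σ α (catSingle ⟨f, g, s⟩ a) (catSingle ⟨e, f, t⟩ b) =
      catSingle ⟨e, g, t ≫ s⟩ (a * σ f g s b * α e f g s t) := by
  rw [catMul_catSingle, dif_pos rfl]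
  simp only [castRH_rfl, RingHom.id_apply, eqToHom_refl]
  rw [Category.comp_id]
  rfl

lemma catSingle_ne_zero {p : CMor G} {a : A p.2.1} (ha : a ≠ 0) : catSingle p a ≠ 0 := by
  classical
  exact DFinsupp.single_ne_zero.mpr ha

lemma catSingle_injective (p : CMor G) : Function.Injective (catSingle (A := A) p) := by
  classical
  exact DFinsupp.single_injective (β := fun q : CMor G ↦ A q.2.1)

variable {σ α}
variable (hαne : ∀ (e f g : G) (s : f ⟶ g) (t : e ⟶ f), α e f g s t ≠ 0)
  (hcomm : ∀ x y : CP A, catMul σ α x y = catMul σ α y x)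
include hαne hcomm

theorem eq_of_hom_of_catMul_comm {e f : G} (s : e ⟶ f) : e = f := by
  by_contra hne
  have h := hcomm (catSingle ⟨e, f, s⟩ 1) (catSingle ⟨e, e, 𝟙 e⟩ 1)
  rw [catMul_catSingle_comp, catMul_catSingle_of_ne (h := Ne.symm hne)] at h
  exact catSingle_ne_zero (by simpa using hαne e e f s (𝟙 e)) h

theorem comp_comm_of_catMul_comm {e : G} (s t : e ⟶ e) : s ≫ t = t ≫ s := by
  have h := hcomm (catSingle ⟨e, e, s⟩ 1) (catSingle ⟨e, e, t⟩ 1)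
  rw [catMul_catSingle_comp, catMul_catSingle_comp] at h
  classical
  rcases (DFinsupp.single_eq_single_iff _ _ _ _).mp h with ⟨hidx, _⟩ | ⟨hzero, _⟩
  · simpa using hidx.symm
  · exact absurd (by simpa using hzero) (hαne e e e s t)

theorem coeff_eq_of_catMul_comm {e : G} (s t : e ⟶ e) (a b : A e) :
    a * σ e e s b * α e e e s t = b * σ e e t a * α e e e t s := by
  have h := hcomm (catSingle ⟨e, e, s⟩ a) (catSingle ⟨e, e, t⟩ b)
  rw [catMul_catSingle_comp, catMul_catSingle_comp,
    comp_comm_of_catMul_comm hαne hcomm t s] at h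
  exact catSingle_injective _ h

end CrossedProduct

theorem commutative_category_crossed_product_necessary_general
    {G : Type*} [Category G] {A : G → Type*} [∀ e, Ring (A e)]
    (σ : ∀ e f : G, (e ⟶ f) → (A e →+* A f))
    (α : ∀ e f g : G, (f ⟶ g) → (e ⟶ f) → A g)
    (hα1r : ∀ (e f : G) (s : e ⟶ f), α e e f s (𝟙 e) = 1)
    (hα1l : ∀ (e f : G) (s : e ⟶ f), α e f f (𝟙 f) s = 1)
    (hαne : ∀ (e f g : G) (s : f ⟶ g) (t : e ⟶ f), α e f g s t ≠ 0)
    (hcomm : ∀ x y : CP A, catMul σ α x y = catMul σ α y x) :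
    (∀ (e f : G), (e ⟶ f) → e = f) ∧
    (∀ (e : G) (s t : e ⟶ e), s ≫ t = t ≫ s) ∧
    (∀ (e : G) (s : e ⟶ e), σ e e s = RingHom.id (A e)) ∧
    (∀ (e : G) (a b : A e), a * b = b * a) ∧
    (∀ (e : G) (s t : e ⟶ e), α e e e s t = α e e e t s) := by
  have hσ : ∀ (e : G) (s : e ⟶ e), σ e e s = RingHom.id (A e) := fun e s ↦ by
    ext b
    simpa [hα1r, hα1l] using coeff_eq_of_catMul_comm hαne hcomm s (𝟙 e) 1 b
  refine ⟨fun _ _ ↦ eq_of_hom_of_catMul_comm hαne hcomm,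
    fun _ ↦ comp_comm_of_catMul_comm hαne hcomm, hσ, fun e a b ↦ ?_, fun e s t ↦ ?_⟩
  · simpa [hσ, hα1r] using coeff_eq_of_catMul_comm hαne hcomm (𝟙 e) (𝟙 e) a b
  · simpa using coeff_eq_of_catMul_comm hαne hcomm s t 1 1

/-- if all `α(s,t)` are nonzero and the category crossed product
`A ⋊_α^σ G` (over a small category with finitely many objects) is commutative,
then every morphism of `G` is an endomorphism and each monoid `G_e` is abelian,
each `σ_s` with `d(s) = c(s)` is the identity, each `A_e` is commutative, and
`α` is symmetric. -/
theorem commutative_category_crossed_product_necessary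
    {G : Type*} [Category G] [Finite G] {A : G → Type*} [∀ e, Ring (A e)]
    (σ : ∀ e f : G, (e ⟶ f) → (A e →+* A f))
    (α : ∀ e f g : G, (f ⟶ g) → (e ⟶ f) → A g)
    (hσ1 : ∀ e : G, σ e e (𝟙 e) = RingHom.id (A e))
    (hα1r : ∀ (e f : G) (s : e ⟶ f), α e e f s (𝟙 e) = 1)
    (hα1l : ∀ (e f : G) (s : e ⟶ f), α e f f (𝟙 f) s = 1)
    (hcoc : ∀ (e f g h : G) (s : g ⟶ h) (t : f ⟶ g) (r : e ⟶ f),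
      α f g h s t * α e f h (t ≫ s) r = σ g h s (α e f g t r) * α e g h s (r ≫ t))
    (htw : ∀ (e f g : G) (s : f ⟶ g) (t : e ⟶ f) (a : A e),
      σ f g s (σ e f t a) * α e f g s t = α e f g s t * σ e g (t ≫ s) a)
    (hαne : ∀ (e f g : G) (s : f ⟶ g) (t : e ⟶ f), α e f g s t ≠ 0)
    (hcomm : ∀ x y : CP A, catMul σ α x y = catMul σ α y x) :
    (∀ (e f : G), (e ⟶ f) → e = f) ∧
    (∀ (e : G) (s t : e ⟶ e), s ≫ t = t ≫ s) ∧
    (∀ (e : G) (s : e ⟶ e), σ e e s = RingHom.id (A e)) ∧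
    (∀ (e : G) (a b : A e), a * b = b * a) ∧
    (∀ (e : G) (s t : e ⟶ e), α e e e s t = α e e e t s) :=
  commutative_category_crossed_product_necessary_general σ α hα1r hα1l hαne hcomm
end

section
/- Let A ⋊_α^σ G be a category crossed product over a small category G. Suppose (ii) every morphism of G is an endomorphism (d(s) = c(s) for all s) and each monoid G_e is abelian; (iii) each σ_s is the identity on A_{c(s)}; (iv) each A_e is commutative; and (v) α is symmetric on each G_e. Then A ⋊_α^σ G is commutative. -/
open CategoryTheory

section CrossedProduct

variable {G : Type*} [Category G] {A : G → Type*}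

open Classical in
noncomputable def catMulTerm [∀ e, Ring (A e)]
    (σ : ∀ e f : G, (e ⟶ f) → (A e →+* A f))
    (α : ∀ e f g : G, (f ⟶ g) → (e ⟶ f) → A g)
    (p : CMor G) (a : A p.2.1) (q : CMor G) (b : A q.2.1) : CP A :=
  if h : q.2.1 = p.1 then
    DFinsupp.single (⟨q.1, p.2.1, (q.2.2 ≫ eqToHom h) ≫ p.2.2⟩ : CMor G)
      (a * σ p.1 p.2.1 p.2.2 (castRH A h b) * α q.1 p.1 p.2.1 p.2.2 (q.2.2 ≫ eqToHom h))
  else 0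

section Ring

variable [∀ e, Ring (A e)]
  (σ : ∀ e f : G, (e ⟶ f) → (A e →+* A f))
  (α : ∀ e f g : G, (f ⟶ g) → (e ⟶ f) → A g)

open Classical in
theorem catMul_eq_sum_sum_catMulTerm (x y : CP A) :
    catMul σ α x y = x.sum fun p a => y.sum fun q b => catMulTerm σ α p a q b :=
  rfl

theorem catMul_comm_of_catMulTerm_comm
    (hterm : ∀ p a q b, catMulTerm σ α p a q b = catMulTerm σ α q b p a) (x y : CP A) :
    catMul σ α x y = catMul σ α y x := by
  classical
  rw [catMul_eq_sum_sum_catMulTerm, catMul_eq_sum_sum_catMulTerm, DFinsupp.sum_comm]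
  exact congrArg y.sum <| funext fun q => funext fun b =>
    congrArg x.sum <| funext fun p => funext fun a => hterm p a q b

theorem catMulTerm_of_ne {p q : CMor G} (a : A p.2.1) (b : A q.2.1) (h : q.2.1 ≠ p.1) :
    catMulTerm σ α p a q b = 0 :=
  dif_neg h

theorem catMulTerm_endo {e : G} (s t : e ⟶ e) (a b : A e) :
    catMulTerm σ α ⟨e, e, s⟩ a ⟨e, e, t⟩ b =
      catSingle ⟨e, e, t ≫ s⟩ (a * σ e e s b * α e e e s t) := by
  simp only [catMulTerm, catSingle, dif_pos, eqToHom_refl, Category.comp_id, castRH,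
    RingHom.id_apply]
  rw [Category.comp_id]

end Ring

/-- `(a u_s)(b u_t)` vanishes unless `s, t` lie in one monoid `G_e`, and there it is
`a b α(s,t) u_{st}`, which is symmetric in the two factors. -/
theorem catMulTerm_comm [∀ e, CommRing (A e)]
    (σ : ∀ e f : G, (e ⟶ f) → (A e →+* A f))
    (α : ∀ e f g : G, (f ⟶ g) → (e ⟶ f) → A g)
    (hendo : ∀ (e f : G), (e ⟶ f) → e = f)
    (habel : ∀ (e : G) (s t : e ⟶ e), s ≫ t = t ≫ s)
    (hσid : ∀ (e : G) (s : e ⟶ e), σ e e s = RingHom.id (A e))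
    (hsym : ∀ (e : G) (s t : e ⟶ e), α e e e s t = α e e e t s)
    (p : CMor G) (a : A p.2.1) (q : CMor G) (b : A q.2.1) :
    catMulTerm σ α p a q b = catMulTerm σ α q b p a := by
  obtain ⟨e, _, s⟩ := p
  obtain ⟨f, _, t⟩ := q
  obtain rfl := hendo _ _ s
  obtain rfl := hendo _ _ t
  by_cases hfe : f = e
  · subst hfe
    rw [catMulTerm_endo, catMulTerm_endo, habel, hσid, hσid, hsym, RingHom.id_apply,
      RingHom.id_apply, mul_comm a b]
  · rw [catMulTerm_of_ne _ _ _ _ hfe, catMulTerm_of_ne _ _ _ _ (Ne.symm hfe)]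

end CrossedProduct

theorem commutative_category_crossed_product_sufficient_general
    {G : Type*} [Category G] {A : G → Type*} [∀ e, CommRing (A e)]
    (σ : ∀ e f : G, (e ⟶ f) → (A e →+* A f))
    (α : ∀ e f g : G, (f ⟶ g) → (e ⟶ f) → A g)
    (hendo : ∀ (e f : G), (e ⟶ f) → e = f)
    (habel : ∀ (e : G) (s t : e ⟶ e), s ≫ t = t ≫ s)
    (hσid : ∀ (e : G) (s : e ⟶ e), σ e e s = RingHom.id (A e))
    (hsym : ∀ (e : G) (s t : e ⟶ e), α e e e s t = α e e e t s) :
    ∀ x y : CP A, catMul σ α x y = catMul σ α y x :=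
  catMul_comm_of_catMulTerm_comm σ α (catMulTerm_comm σ α hendo habel hσid hsym)

/-- if every morphism of `G` is an endomorphism, each monoid `G_e`
is abelian, each `σ_s` is the identity, each `A_e` is commutative and `α` is
symmetric on each `G_e`, then the category crossed product `A ⋊_α^σ G` is
commutative. -/
theorem commutative_category_crossed_product_sufficient
    {G : Type*} [Category G] {A : G → Type*} [∀ e, CommRing (A e)]
    (σ : ∀ e f : G, (e ⟶ f) → (A e →+* A f))
    (α : ∀ e f g : G, (f ⟶ g) → (e ⟶ f) → A g)
    (hσ1 : ∀ e : G, σ e e (𝟙 e) = RingHom.id (A e))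
    (hα1r : ∀ (e f : G) (s : e ⟶ f), α e e f s (𝟙 e) = 1)
    (hα1l : ∀ (e f : G) (s : e ⟶ f), α e f f (𝟙 f) s = 1)
    (hcoc : ∀ (e f g h : G) (s : g ⟶ h) (t : f ⟶ g) (r : e ⟶ f),
      α f g h s t * α e f h (t ≫ s) r = σ g h s (α e f g t r) * α e g h s (r ≫ t))
    (htw : ∀ (e f g : G) (s : f ⟶ g) (t : e ⟶ f) (a : A e),
      σ f g s (σ e f t a) * α e f g s t = α e f g s t * σ e g (t ≫ s) a)
    (hendo : ∀ (e f : G), (e ⟶ f) → e = f)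
    (habel : ∀ (e : G) (s t : e ⟶ e), s ≫ t = t ≫ s)
    (hσid : ∀ (e : G) (s : e ⟶ e), σ e e s = RingHom.id (A e))
    (hsym : ∀ (e : G) (s t : e ⟶ e), α e e e s t = α e e e t s) :
    ∀ x y : CP A, catMul σ α x y = catMul σ α y x :=
  commutative_category_crossed_product_sufficient_general σ α hendo habel hσid hsym
end

section
/- Let A ⋊_α^σ G be a category crossed product. An element x = Σ_{s∈G} a_s u_s belongs to the center of A ⋊_α^σ G only if a_s = 0 whenever d(s) ≠ c(s). Consequently every central element can be written as Σ_{e∈ob(G)} Σ_{s∈G_e} a_s u_s, and x is central if and only if each component Σ_{s∈G_e} a_s u_s is central in the monoid crossed product A_e ⋊_{α_e}^{σ_e} G_e and, for all distinct objects e, f and all r, g ∈ G with c(r)=c(g)=f, d(r)=d(g)=e, one has Σ_{s∈G_e, rs=g} σ_r(a_s) α(r,s) = Σ_{t∈G_f, tr=g} a_t α(t,r). -/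
open CategoryTheory

lemma DFinsupp.sum_filter_of_ne {ι R : Type*} {β : ι → Type*} [DecidableEq ι]
    [∀ i, AddCommMonoid (β i)] [∀ i (a : β i), Decidable (a ≠ 0)] [AddCommMonoid R]
    (f : Π₀ i, β i) (P : ι → Prop) [DecidablePred P] (F : ∀ i, β i → R)
    (h : ∀ i, f i ≠ 0 → F i (f i) ≠ 0 → P i) :
    (f.filter P).sum F = f.sum F := by
  rw [DFinsupp.sum, DFinsupp.sum, DFinsupp.support_filter]
  calc ∑ i ∈ f.support with P i, F i (f.filter P i) = ∑ i ∈ f.support with P i, F i (f i) :=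
        Finset.sum_congr rfl fun i hi => by
          rw [DFinsupp.filter_apply_pos _ (Finset.mem_filter.1 hi).2]
    _ = ∑ i ∈ f.support, F i (f i) :=
        Finset.sum_filter_of_ne fun i hi => h i (DFinsupp.mem_support_iff.1 hi)

section CategoryCrossedProduct

open scoped Classical

variable {G : Type*} [Category G] {A : G → Type*} [∀ e, Ring (A e)]
  (σ : ∀ e f : G, (e ⟶ f) → (A e →+* A f)) (α : ∀ e f g : G, (f ⟶ g) → (e ⟶ f) → A g)

noncomputable def monomialMul (p : CMor G) (a : A p.2.1) (q : CMor G) (b : A q.2.1) : CP A :=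
  if h : q.2.1 = p.1 then
    DFinsupp.single (⟨q.1, p.2.1, (q.2.2 ≫ eqToHom h) ≫ p.2.2⟩ : CMor G)
      (a * σ p.1 p.2.1 p.2.2 (castRH A h b) * α q.1 p.1 p.2.1 p.2.2 (q.2.2 ≫ eqToHom h))
  else 0

/-- `endoComponent x e` is the component `Σ_{s ∈ G_e} a_s u_s`, and the monoid crossed product
`A_e ⋊ G_e` is the subring of the `y` with `IsSupportedOnEndo e y`. -/
noncomputable def endoComponent (x : CP A) (e : G) : CP A := x.filter fun q => q.1 = e ∧ q.2.1 = e

def IsSupportedOnEndo (e : G) (y : CP A) : Prop := ∀ q : CMor G, y q ≠ 0 → q.1 = e ∧ q.2.1 = e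

def IsEndoSupported (x : CP A) : Prop := ∀ p : CMor G, p.1 ≠ p.2.1 → x p = 0

lemma catMul_eq_sum (x y : CP A) :
    catMul σ α x y = x.sum fun p a => y.sum fun q b => monomialMul σ α p a q b := rfl

lemma single_mk_congr {e f : G} {g g' : e ⟶ f} (h : g = g') (a : A f) :
    (DFinsupp.single ⟨e, f, g⟩ a : CP A) = DFinsupp.single ⟨e, f, g'⟩ a := by
  subst h; rfl

lemma single_mk_apply_mk {e f : G} (g g' : e ⟶ f) (a : A f) :
    (DFinsupp.single ⟨e, f, g⟩ a : CP A) ⟨e, f, g'⟩ = if g = g' then a else 0 := by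
  by_cases h : g = g'
  · subst h; simp
  · rw [if_neg h, DFinsupp.single_eq_of_ne]
    intro hc
    exact h (by simpa using hc.symm)

lemma isSupportedOnEndo_single {e : G} (r : e ⟶ e) (b : A e) :
    IsSupportedOnEndo e (DFinsupp.single ⟨e, e, r⟩ b) := fun q hq => by
  obtain rfl := Finset.mem_singleton.1
    (DFinsupp.support_single_subset (DFinsupp.mem_support_iff.2 hq))
  exact ⟨rfl, rfl⟩

lemma monomialMul_mk_mk {e f g : G} (s : f ⟶ g) (a : A g) (t : e ⟶ f) (b : A f) :
    monomialMul σ α ⟨f, g, s⟩ a ⟨e, f, t⟩ b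
      = DFinsupp.single ⟨e, g, t ≫ s⟩ (a * σ f g s b * α e f g s t) := by
  simp only [monomialMul, dif_pos, eqToHom_refl, castRH_rfl, RingHom.id_apply, Category.comp_id]
  exact single_mk_congr (by rw [Category.comp_id] : (t ≫ 𝟙 f) ≫ s = t ≫ s) (A := A) _

lemma monomialMul_of_ne {p q : CMor G} (h : q.2.1 ≠ p.1) (a : A p.2.1) (b : A q.2.1) :
    monomialMul σ α p a q b = 0 :=
  dif_neg h

lemma monomialMul_zero_left (p q : CMor G) (b : A q.2.1) : monomialMul σ α p 0 q b = 0 := by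
  unfold monomialMul; split <;> simp

lemma monomialMul_zero_right (p : CMor G) (a : A p.2.1) (q : CMor G) :
    monomialMul σ α p a q 0 = 0 := by
  unfold monomialMul; split <;> simp

lemma catMul_single_right (x : CP A) (q : CMor G) (b : A q.2.1) :
    catMul σ α x (DFinsupp.single q b) = x.sum fun p a => monomialMul σ α p a q b :=
  Finset.sum_congr rfl fun p _ => DFinsupp.sum_single_index (monomialMul_zero_right σ α p _ q)

lemma catMul_single_left (p : CMor G) (a : A p.2.1) (x : CP A) :
    catMul σ α (DFinsupp.single p a) x = x.sum fun q b => monomialMul σ α p a q b :=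
  DFinsupp.sum_single_index (Finset.sum_eq_zero fun q _ => monomialMul_zero_left σ α p q _)

theorem forall_catMul_comm_iff_forall_single (x : CP A) :
    (∀ y, catMul σ α x y = catMul σ α y x) ↔
      ∀ (q : CMor G) (b : A q.2.1),
        catMul σ α x (DFinsupp.single q b) = catMul σ α (DFinsupp.single q b) x := by
  refine ⟨fun h q b => h _, fun h y => ?_⟩
  calc catMul σ α x y = y.sum fun q b => catMul σ α x (DFinsupp.single q b) := by
        rw [catMul_eq_sum, DFinsupp.sum_comm]
        exact Finset.sum_congr rfl fun q _ => (catMul_single_right σ α x q _).symm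
    _ = y.sum fun q b => catMul σ α (DFinsupp.single q b) x :=
        Finset.sum_congr rfl fun q _ => h q _
    _ = catMul σ α y x :=
        Finset.sum_congr rfl fun q _ => catMul_single_left σ α q _ x

lemma catMul_filter_left (x y : CP A) (P : CMor G → Prop) [DecidablePred P]
    (h : ∀ p q, x p ≠ 0 → y q ≠ 0 → q.2.1 = p.1 → P p) :
    catMul σ α (x.filter P) y = catMul σ α x y :=
  DFinsupp.sum_filter_of_ne _ _ _ fun p hp hne => by
    by_contra hP
    exact hne (Finset.sum_eq_zero fun q hq => monomialMul_of_ne σ α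
      (fun hc => hP (h p q hp (DFinsupp.mem_support_iff.1 hq) hc)) _ _)

lemma catMul_filter_right (x y : CP A) (P : CMor G → Prop) [DecidablePred P]
    (h : ∀ p q, y p ≠ 0 → x q ≠ 0 → q.2.1 = p.1 → P q) :
    catMul σ α y (x.filter P) = catMul σ α y x :=
  Finset.sum_congr rfl fun p hp => DFinsupp.sum_filter_of_ne _ _ _ fun q hq hne => by
    by_contra hP
    exact hne (monomialMul_of_ne σ α
      (fun hc => hP (h p q (DFinsupp.mem_support_iff.1 hp) hq hc)) _ _)

lemma monomialMul_single_id_one (hα1r : ∀ (e f : G) (s : e ⟶ f), α e e f s (𝟙 e) = 1)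
    (e : G) (p : CMor G) (a : A p.2.1) :
    monomialMul σ α p a ⟨e, e, 𝟙 e⟩ 1 = (DFinsupp.single p a).filter (·.1 = e) := by
  obtain ⟨f, g, s⟩ := p
  by_cases h : e = f
  · subst h
    rw [monomialMul_mk_mk, DFinsupp.filter_single, if_pos rfl]
    simpa [hα1r] using single_mk_congr (Category.id_comp s) a
  · rw [monomialMul_of_ne σ α h, DFinsupp.filter_single, if_neg (Ne.symm h)]

lemma monomialMul_id_one_single (hσ1 : ∀ e : G, σ e e (𝟙 e) = RingHom.id (A e))
    (hα1l : ∀ (e f : G) (s : e ⟶ f), α e f f (𝟙 f) s = 1)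
    (e : G) (q : CMor G) (b : A q.2.1) :
    monomialMul σ α ⟨e, e, 𝟙 e⟩ 1 q b = (DFinsupp.single q b).filter (·.2.1 = e) := by
  obtain ⟨f, g, s⟩ := q
  by_cases h : g = e
  · subst h
    rw [monomialMul_mk_mk, DFinsupp.filter_single, if_pos rfl]
    simpa [hσ1, hα1l] using single_mk_congr (Category.comp_id s) b
  · rw [monomialMul_of_ne σ α h, DFinsupp.filter_single, if_neg h]

lemma catMul_single_id_one (hα1r : ∀ (e f : G) (s : e ⟶ f), α e e f s (𝟙 e) = 1)
    (x : CP A) (e : G) :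
    catMul σ α x (DFinsupp.single ⟨e, e, 𝟙 e⟩ 1) = x.filter (·.1 = e) := by
  simp only [catMul_single_right, monomialMul_single_id_one σ α hα1r,
    ← DFinsupp.filterAddMonoidHom_apply, ← map_dfinsuppSum, DFinsupp.sum_single]

lemma single_id_one_catMul (hσ1 : ∀ e : G, σ e e (𝟙 e) = RingHom.id (A e))
    (hα1l : ∀ (e f : G) (s : e ⟶ f), α e f f (𝟙 f) s = 1) (x : CP A) (e : G) :
    catMul σ α (DFinsupp.single ⟨e, e, 𝟙 e⟩ 1) x = x.filter (·.2.1 = e) := by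
  simp only [catMul_single_left, monomialMul_id_one_single σ α hσ1 hα1l,
    ← DFinsupp.filterAddMonoidHom_apply, ← map_dfinsuppSum, DFinsupp.sum_single]

lemma isEndoSupported_of_forall_catMul_comm (hσ1 : ∀ e : G, σ e e (𝟙 e) = RingHom.id (A e))
    (hα1r : ∀ (e f : G) (s : e ⟶ f), α e e f s (𝟙 e) = 1)
    (hα1l : ∀ (e f : G) (s : e ⟶ f), α e f f (𝟙 f) s = 1)
    {x : CP A} (hx : ∀ y, catMul σ α x y = catMul σ α y x) : IsEndoSupported x := fun p hp => by
  have h := DFunLike.congr_fun (hx (DFinsupp.single ⟨p.1, p.1, 𝟙 p.1⟩ 1)) p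
  rwa [catMul_single_id_one σ α hα1r, single_id_one_catMul σ α hσ1 hα1l, DFinsupp.filter_apply,
    DFinsupp.filter_apply, if_pos rfl, if_neg (Ne.symm hp)] at h

lemma mul_finsum_cond_endo {e f : G} (x : CP A) (P : (e ⟶ e) → Prop)
    (w : (e ⟶ e) → A e → A f) (hw : ∀ t, w t 0 = 0) (b : A f) :
    b * ∑ᶠ (t : e ⟶ e) (_ : P t), w t (x ⟨e, e, t⟩)
      = ∑ᶠ (t : e ⟶ e) (_ : P t), b * w t (x ⟨e, e, t⟩) := by
  have hinj : Function.Injective fun t : e ⟶ e => (⟨e, e, t⟩ : CMor G) := fun t t' h => by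
    simpa using h
  have hfin : (Function.support fun t => w t (x ⟨e, e, t⟩)).Finite :=
    (x.support.finite_toSet.preimage hinj.injOn).subset fun t ht =>
      DFinsupp.mem_support_iff.2 fun h0 => ht (by simp only [h0, hw])
  exact (AddMonoidHom.mulLeft b).map_finsum_mem' (hfin.inter_of_right _)

namespace IsEndoSupported

variable {σ α} {x : CP A}

lemma filter (hx : IsEndoSupported x) (P : CMor G → Prop) [DecidablePred P] :
    IsEndoSupported (x.filter P) := fun p hp => by
  rw [DFinsupp.filter_apply, hx p hp, ite_self]

lemma sum_eq_finsum (hx : IsEndoSupported x) {R : Type*} [AddCommMonoid R] (f : G)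
    (F : ∀ p : CMor G, A p.2.1 → R) (hF0 : ∀ p, F p 0 = 0)
    (hF : ∀ (e : G) (t : e ⟶ e) (a : A e), e ≠ f → F ⟨e, e, t⟩ a = 0) :
    x.sum F = ∑ᶠ t : f ⟶ f, F ⟨f, f, t⟩ (x ⟨f, f, t⟩) := by
  have hinj : Function.Injective fun t : f ⟶ f => (⟨f, f, t⟩ : CMor G) := fun t t' h => by
    simpa using h
  rw [finsum_eq_sum_of_support_subset _ (s := x.support.preimage _ hinj.injOn)]
  · refine (Finset.sum_preimage _ _ _ (fun p => F p (x p)) fun p hp hnot => ?_).symm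
    obtain ⟨e, e', t⟩ := p
    obtain rfl : e = e' := by_contra fun h => DFinsupp.mem_support_iff.1 hp (hx _ h)
    exact hF e t _ fun h => hnot (h ▸ ⟨t, rfl⟩)
  · intro t ht
    simp only [Finset.coe_preimage, Set.mem_preimage, Finset.mem_coe, DFinsupp.mem_support_iff]
    exact fun h0 => ht (by simp only [h0, hF0])

lemma catMul_single_apply (hx : IsEndoSupported x) {e f : G} (r : e ⟶ f) (b : A f)
    (m : CMor G) :
    catMul σ α x (DFinsupp.single ⟨e, f, r⟩ b) m
      = ∑ᶠ t : f ⟶ f,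
          (DFinsupp.single ⟨e, f, r ≫ t⟩ (x ⟨f, f, t⟩ * σ f f t b * α e f f t r) : CP A) m := by
  rw [catMul_single_right, DFinsupp.sum_apply,
    hx.sum_eq_finsum f _ (fun p => by rw [monomialMul_zero_left, DFinsupp.zero_apply])
      (fun e' t a h => by rw [monomialMul_of_ne σ α (Ne.symm h), DFinsupp.zero_apply])]
  simp only [monomialMul_mk_mk]

lemma single_catMul_apply (hx : IsEndoSupported x) {e f : G} (r : e ⟶ f) (b : A f)
    (m : CMor G) :
    catMul σ α (DFinsupp.single ⟨e, f, r⟩ b) x m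
      = ∑ᶠ s : e ⟶ e,
          (DFinsupp.single ⟨e, f, s ≫ r⟩ (b * σ e f r (x ⟨e, e, s⟩) * α e e f r s) : CP A) m := by
  rw [catMul_single_left, DFinsupp.sum_apply,
    hx.sum_eq_finsum e _ (fun q => by rw [monomialMul_zero_right, DFinsupp.zero_apply])
      (fun e' t a h => by rw [monomialMul_of_ne σ α h, DFinsupp.zero_apply])]
  simp only [monomialMul_mk_mk]

lemma catMul_single_apply_mk (hx : IsEndoSupported x) {e f : G} (r g : e ⟶ f) (b : A f) :
    catMul σ α x (DFinsupp.single ⟨e, f, r⟩ b) ⟨e, f, g⟩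
      = ∑ᶠ (t : f ⟶ f) (_ : r ≫ t = g), x ⟨f, f, t⟩ * σ f f t b * α e f f t r := by
  simp only [hx.catMul_single_apply, single_mk_apply_mk, finsum_eq_if]

lemma single_catMul_apply_mk (hx : IsEndoSupported x) {e f : G} (r g : e ⟶ f) (b : A f) :
    catMul σ α (DFinsupp.single ⟨e, f, r⟩ b) x ⟨e, f, g⟩
      = ∑ᶠ (s : e ⟶ e) (_ : s ≫ r = g), b * σ e f r (x ⟨e, e, s⟩) * α e e f r s := by
  simp only [hx.single_catMul_apply, single_mk_apply_mk, finsum_eq_if]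

lemma catMul_single_apply_eq_zero (hx : IsEndoSupported x) {e f : G} (r : e ⟶ f) (b : A f)
    {m : CMor G} (hm : ¬(m.1 = e ∧ m.2.1 = f)) :
    catMul σ α x (DFinsupp.single ⟨e, f, r⟩ b) m = 0 := by
  rw [hx.catMul_single_apply]
  exact finsum_eq_zero_of_forall_eq_zero fun t =>
    DFinsupp.single_eq_of_ne fun h => hm (h ▸ ⟨rfl, rfl⟩)

lemma single_catMul_apply_eq_zero (hx : IsEndoSupported x) {e f : G} (r : e ⟶ f) (b : A f)
    {m : CMor G} (hm : ¬(m.1 = e ∧ m.2.1 = f)) :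
    catMul σ α (DFinsupp.single ⟨e, f, r⟩ b) x m = 0 := by
  rw [hx.single_catMul_apply]
  exact finsum_eq_zero_of_forall_eq_zero fun s =>
    DFinsupp.single_eq_of_ne fun h => hm (h ▸ ⟨rfl, rfl⟩)

lemma endoComponent_catMul (hx : IsEndoSupported x) {e : G} {y : CP A}
    (hy : IsSupportedOnEndo e y) : catMul σ α (endoComponent x e) y = catMul σ α x y :=
  catMul_filter_left σ α x y _ fun p q hp hq hqp => by
    have hp₁ : p.1 = e := hqp.symm.trans (hy q hq).2
    exact ⟨hp₁, (not_not.1 fun h => hp (hx p h)).symm.trans hp₁⟩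

lemma catMul_endoComponent (hx : IsEndoSupported x) {e : G} {y : CP A}
    (hy : IsSupportedOnEndo e y) : catMul σ α y (endoComponent x e) = catMul σ α y x :=
  catMul_filter_right σ α x y _ fun p q hp hq hqp => by
    have hq₂ : q.2.1 = e := hqp.trans (hy p hp).1
    exact ⟨(not_not.1 fun h => hq (hx q h)).trans hq₂, hq₂⟩

lemma crossing_sum_eq (hx : IsEndoSupported x) (hc : ∀ y, catMul σ α x y = catMul σ α y x)
    {e f : G} (r g : e ⟶ f) :
    (∑ᶠ (s : e ⟶ e) (_ : s ≫ r = g), σ e f r (x ⟨e, e, s⟩) * α e e f r s)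
      = ∑ᶠ (t : f ⟶ f) (_ : r ≫ t = g), x ⟨f, f, t⟩ * α e f f t r := by
  have h := DFunLike.congr_fun (hc (DFinsupp.single ⟨e, f, r⟩ 1)) ⟨e, f, g⟩
  rw [hx.catMul_single_apply_mk, hx.single_catMul_apply_mk] at h
  simpa only [map_one, mul_one, one_mul] using h.symm

lemma apply_mul_eq_mul_apply (hσ1 : ∀ e : G, σ e e (𝟙 e) = RingHom.id (A e))
    (hα1r : ∀ (e f : G) (s : e ⟶ f), α e e f s (𝟙 e) = 1)
    (hα1l : ∀ (e f : G) (s : e ⟶ f), α e f f (𝟙 f) s = 1) (hx : IsEndoSupported x) {f : G}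
    (hf : ∀ y, IsSupportedOnEndo f y →
      catMul σ α (endoComponent x f) y = catMul σ α y (endoComponent x f))
    (t : f ⟶ f) (b : A f) :
    x ⟨f, f, t⟩ * σ f f t b = b * x ⟨f, f, t⟩ := by
  have hxf : IsEndoSupported (endoComponent x f) := hx.filter _
  have h := DFunLike.congr_fun (hf _ (isSupportedOnEndo_single (𝟙 f) b)) ⟨f, f, t⟩
  rw [hxf.catMul_single_apply_mk, hxf.single_catMul_apply_mk] at h
  simp only [Category.id_comp, Category.comp_id, finsum_cond_eq_left, hσ1, hα1r, hα1l,
    RingHom.id_apply, mul_one] at h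
  rwa [endoComponent, DFinsupp.filter_apply_pos _ ⟨rfl, rfl⟩] at h

lemma catMul_single_endo_comm (hx : IsEndoSupported x) {e : G}
    (he : ∀ y, IsSupportedOnEndo e y →
      catMul σ α (endoComponent x e) y = catMul σ α y (endoComponent x e))
    (r : e ⟶ e) (b : A e) :
    catMul σ α x (DFinsupp.single ⟨e, e, r⟩ b) = catMul σ α (DFinsupp.single ⟨e, e, r⟩ b) x := by
  have hy := isSupportedOnEndo_single r b
  rw [← hx.endoComponent_catMul hy, he _ hy, hx.catMul_endoComponent hy]

lemma catMul_single_comm_of_crossing_sum_eq (hx : IsEndoSupported x) {e f : G}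
    (hcomm : ∀ (t : f ⟶ f) (b : A f), x ⟨f, f, t⟩ * σ f f t b = b * x ⟨f, f, t⟩) (r : e ⟶ f)
    (hcross : ∀ g : e ⟶ f,
      (∑ᶠ (s : e ⟶ e) (_ : s ≫ r = g), σ e f r (x ⟨e, e, s⟩) * α e e f r s)
        = ∑ᶠ (t : f ⟶ f) (_ : r ≫ t = g), x ⟨f, f, t⟩ * α e f f t r)
    (b : A f) :
    catMul σ α x (DFinsupp.single ⟨e, f, r⟩ b) = catMul σ α (DFinsupp.single ⟨e, f, r⟩ b) x := by
  ext ⟨m₁, m₂, g⟩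
  by_cases hm : m₁ = e ∧ m₂ = f
  · obtain ⟨rfl, rfl⟩ := hm
    calc catMul σ α x (DFinsupp.single ⟨m₁, m₂, r⟩ b) ⟨m₁, m₂, g⟩
        = ∑ᶠ (t : m₂ ⟶ m₂) (_ : r ≫ t = g), b * (x ⟨m₂, m₂, t⟩ * α m₁ m₂ m₂ t r) := by
          rw [hx.catMul_single_apply_mk]
          simp only [hcomm, mul_assoc]
      _ = b * ∑ᶠ (s : m₁ ⟶ m₁) (_ : s ≫ r = g),
            σ m₁ m₂ r (x ⟨m₁, m₁, s⟩) * α m₁ m₁ m₂ r s := by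
          rw [hcross, mul_finsum_cond_endo x _ (fun t a => a * α m₁ m₂ m₂ t r) (by simp)]
      _ = catMul σ α (DFinsupp.single ⟨m₁, m₂, r⟩ b) x ⟨m₁, m₂, g⟩ := by
          rw [hx.single_catMul_apply_mk,
            mul_finsum_cond_endo x _ (fun s a => σ m₁ m₂ r a * α m₁ m₁ m₂ r s) (by simp)]
          simp only [mul_assoc]
  · rw [hx.catMul_single_apply_eq_zero r b hm, hx.single_catMul_apply_eq_zero r b hm]

end IsEndoSupported

end CategoryCrossedProduct

open Classical in
theorem center_category_crossed_product_general
    {G : Type*} [CategoryTheory.Category G] {A : G → Type*} [∀ e, Ring (A e)]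
    (σ : ∀ e f : G, (e ⟶ f) → (A e →+* A f))
    (α : ∀ e f g : G, (f ⟶ g) → (e ⟶ f) → A g)
    (hσ1 : ∀ e : G, σ e e (𝟙 e) = RingHom.id (A e))
    (hα1r : ∀ (e f : G) (s : e ⟶ f), α e e f s (𝟙 e) = 1)
    (hα1l : ∀ (e f : G) (s : e ⟶ f), α e f f (𝟙 f) s = 1)
    (x : CP A) :
    (∀ y, catMul σ α x y = catMul σ α y x) ↔
      ((∀ p : CMor G, p.1 ≠ p.2.1 → x p = 0) ∧
        (∀ e : G, ∀ y : CP A, (∀ q : CMor G, y q ≠ 0 → q.1 = e ∧ q.2.1 = e) →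
          catMul σ α (x.filter fun q => q.1 = e ∧ q.2.1 = e) y
            = catMul σ α y (x.filter fun q => q.1 = e ∧ q.2.1 = e)) ∧
        (∀ e f : G, e ≠ f → ∀ r g : e ⟶ f,
          (∑ᶠ (s : e ⟶ e) (_ : s ≫ r = g), σ e f r (x ⟨e, e, s⟩) * α e e f r s)
            = ∑ᶠ (t : f ⟶ f) (_ : r ≫ t = g), x ⟨f, f, t⟩ * α e f f t r)) := by
  constructor
  · intro hc
    have hx := isEndoSupported_of_forall_catMul_comm σ α hσ1 hα1r hα1l hc
    refine ⟨hx, fun e y hy => ?_, fun e f _ r g => hx.crossing_sum_eq hc r g⟩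
    exact (hx.endoComponent_catMul hy).trans ((hc y).trans (hx.catMul_endoComponent hy).symm)
  · rintro ⟨hx, hcomp, hcross⟩
    refine (forall_catMul_comm_iff_forall_single σ α x).2 fun ⟨e, f, r⟩ b => ?_
    by_cases hef : e = f
    · subst hef
      exact IsEndoSupported.catMul_single_endo_comm hx (hcomp e) r b
    · exact IsEndoSupported.catMul_single_comm_of_crossing_sum_eq hx
        (IsEndoSupported.apply_mul_eq_mul_apply hσ1 hα1r hα1l hx (hcomp f)) r
        (hcross e f hef r) b

open Classical in
/-- an element `x` of a category crossed product is central iff its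
coefficients vanish on morphisms with `d(s) ≠ c(s)`, each component over an
endomorphism monoid `G_e` is central in the monoid crossed product
`A_e ⋊_{α_e}^{σ_e} G_e` (= the subring of elements supported on `G_e`), and for
all distinct objects `e ≠ f` and all `r, g ∈ G_{f,e}`,
`Σ_{s ∈ G_e, rs = g} σ_r(a_s) α(r,s) = Σ_{t ∈ G_f, tr = g} a_t α(t,r)`. -/
theorem center_category_crossed_product
    {G : Type*} [CategoryTheory.Category G] {A : G → Type*} [∀ e, Ring (A e)]
    (σ : ∀ e f : G, (e ⟶ f) → (A e →+* A f))
    (α : ∀ e f g : G, (f ⟶ g) → (e ⟶ f) → A g)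
    (hσ1 : ∀ e : G, σ e e (𝟙 e) = RingHom.id (A e))
    (hα1r : ∀ (e f : G) (s : e ⟶ f), α e e f s (𝟙 e) = 1)
    (hα1l : ∀ (e f : G) (s : e ⟶ f), α e f f (𝟙 f) s = 1)
    (hcoc : ∀ (e f g h : G) (s : g ⟶ h) (t : f ⟶ g) (r : e ⟶ f),
      α f g h s t * α e f h (t ≫ s) r = σ g h s (α e f g t r) * α e g h s (r ≫ t))
    (htw : ∀ (e f g : G) (s : f ⟶ g) (t : e ⟶ f) (a : A e),
      σ f g s (σ e f t a) * α e f g s t = α e f g s t * σ e g (t ≫ s) a)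
    (x : CP A) :
    (∀ y, catMul σ α x y = catMul σ α y x) ↔
      ((∀ p : CMor G, p.1 ≠ p.2.1 → x p = 0) ∧
        (∀ e : G, ∀ y : CP A, (∀ q : CMor G, y q ≠ 0 → q.1 = e ∧ q.2.1 = e) →
          catMul σ α (x.filter fun q => q.1 = e ∧ q.2.1 = e) y
            = catMul σ α y (x.filter fun q => q.1 = e ∧ q.2.1 = e)) ∧
        (∀ e f : G, e ≠ f → ∀ r g : e ⟶ f,
          (∑ᶠ (s : e ⟶ e) (_ : s ≫ r = g), σ e f r (x ⟨e, e, s⟩) * α e e f r s)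
            = ∑ᶠ (t : f ⟶ f) (_ : r ≫ t = g), x ⟨f, f, t⟩ * α e f f t r)) :=
  center_category_crossed_product_general σ α hσ1 hα1r hα1l x
end

section
/- Let A ⋊_α^σ G be a groupoid crossed product with G having finitely many objects, A commutative and maximal commutative in A ⋊_α^σ G, and such that for every morphism s, α(s, s⁻¹) is not a zero divisor in A_{c(s)}. Then every nonzero twosided ideal of A ⋊_α^σ G has nonzero intersection with A. -/
open CategoryTheory

/-- `I` is a twosided ideal of the category crossed product `A ⋊_α^σ G`. -/
def IsCrossedIdeal {G : Type*} [Category G] {A : G → Type*} [∀ e, Ring (A e)]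
    (σ : ∀ e f : G, (e ⟶ f) → (A e →+* A f))
    (α : ∀ e f g : G, (f ⟶ g) → (e ⟶ f) → A g)
    (I : Set (CP A)) : Prop :=
  (0 : CP A) ∈ I ∧ (∀ x y, x ∈ I → y ∈ I → x + y ∈ I) ∧ (∀ x, x ∈ I → -x ∈ I) ∧
    ∀ x r, x ∈ I → catMul σ α r x ∈ I ∧ catMul σ α x r ∈ I

/-!
Take a nonzero `x ∈ I` with the fewest nonzero coefficients and a morphism `s : e ⟶ f` with
`x_s ≠ 0`. Right multiplication by `u_{s⁻¹}` does not enlarge supports and moves this coefficient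
to the identity `1_f`, where it becomes `x_s α(s, s⁻¹) ≠ 0`; so `y = x u_{s⁻¹}` is again minimal.
For `a ∈ A_e` the commutator `y a - a y` lies in `I`, and its coefficient at `1_f` vanishes since
`A_f` is commutative; having smaller support it is `0`. Hence `y` commutes with `A`, and maximal
commutativity puts `y` in `A`.
-/

@[simp] lemma castRH_rfl_apply {G : Type*} (A : G → Type*) [∀ e, Ring (A e)] {e : G} (a : A e) :
    castRH A rfl a = a := rfl

lemma DFinsupp.exists_ne_zero_forall_card_support_lt {ι : Type*} {β : ι → Type*}
    [DecidableEq ι] [∀ i, Zero (β i)] [∀ i (x : β i), Decidable (x ≠ 0)] {S : Set (Π₀ i, β i)}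
    (hS : ∃ x ∈ S, x ≠ 0) :
    ∃ x ∈ S, x ≠ 0 ∧ ∀ w ∈ S, w.support.card < x.support.card → w = 0 := by
  obtain ⟨x, ⟨hxS, hx0⟩, hmin⟩ := (measure fun w : Π₀ i, β i => w.support.card).wf.has_min
    {w | w ∈ S ∧ w ≠ 0} hS
  exact ⟨x, hxS, hx0, fun w hwS hlt => by_contra fun hw0 => hmin w ⟨hwS, hw0⟩ hlt⟩

section
open Classical
variable {G : Type*} [Category G] {A : G → Type*} [∀ e, Ring (A e)]
  (σ : ∀ e f : G, (e ⟶ f) → (A e →+* A f)) (α : ∀ e f g : G, (f ⟶ g) → (e ⟶ f) → A g)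

lemma catMul_catSingle_eq_sum (x : CP A) (q : CMor G) (b : A q.2.1) :
    catMul σ α x (catSingle q b)
      = x.sum fun p a =>
          if h : q.2.1 = p.1 then
            DFinsupp.single (⟨q.1, p.2.1, (q.2.2 ≫ eqToHom h) ≫ p.2.2⟩ : CMor G)
              (a * σ p.1 p.2.1 p.2.2 (castRH A h b) * α q.1 p.1 p.2.1 p.2.2 (q.2.2 ≫ eqToHom h))
          else 0 := by
  unfold catMul catSingle
  refine Finset.sum_congr rfl fun p _ => ?_
  dsimp only
  rw [DFinsupp.sum_single_index]
  split <;> simp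

lemma catSingle_catMul_eq_sum (p : CMor G) (a : A p.2.1) (y : CP A) :
    catMul σ α (catSingle p a) y
      = y.sum fun q b =>
          if h : q.2.1 = p.1 then
            DFinsupp.single (⟨q.1, p.2.1, (q.2.2 ≫ eqToHom h) ≫ p.2.2⟩ : CMor G)
              (a * σ p.1 p.2.1 p.2.2 (castRH A h b) * α q.1 p.1 p.2.1 p.2.2 (q.2.2 ≫ eqToHom h))
          else 0 := by
  unfold catMul catSingle
  rw [DFinsupp.sum_single_index]
  exact Finset.sum_eq_zero fun q _ => by dsimp only; split <;> simp

lemma card_support_catMul_catSingle_le (x : CP A) (q : CMor G) (b : A q.2.1) :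
    (catMul σ α x (catSingle q b)).support.card ≤ x.support.card := by
  let target : CMor G → CMor G := fun p =>
    if h : q.2.1 = p.1 then ⟨q.1, p.2.1, (q.2.2 ≫ eqToHom h) ≫ p.2.2⟩ else p
  refine (Finset.card_le_card ?_).trans (Finset.card_image_le (f := target))
  rw [catMul_catSingle_eq_sum]
  refine DFinsupp.support_sum.trans (Finset.biUnion_subset.mpr fun p hp => ?_)
  split_ifs with h
  · refine DFinsupp.support_single_subset.trans (Finset.singleton_subset_iff.mpr ?_)
    exact Finset.mem_image.mpr ⟨p, hp, dif_pos h⟩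
  · simp
end

section
variable {G : Type*} [Category G] {A : G → Type*} [∀ e, Ring (A e)]
  {σ : ∀ e f : G, (e ⟶ f) → (A e →+* A f)} {α : ∀ e f g : G, (f ⟶ g) → (e ⟶ f) → A g}
  {I : Set (CP A)}

lemma IsCrossedIdeal.mul_mem_left (hI : IsCrossedIdeal σ α I) (r : CP A) {x : CP A}
    (hx : x ∈ I) : catMul σ α r x ∈ I :=
  (hI.2.2.2 x r hx).1

lemma IsCrossedIdeal.mul_mem_right (hI : IsCrossedIdeal σ α I) {x : CP A} (hx : x ∈ I)
    (r : CP A) : catMul σ α x r ∈ I :=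
  (hI.2.2.2 x r hx).2

lemma IsCrossedIdeal.sub_mem (hI : IsCrossedIdeal σ α I) {x y : CP A} (hx : x ∈ I)
    (hy : y ∈ I) : x - y ∈ I :=
  sub_eq_add_neg x y ▸ hI.2.1 x (-y) hx (hI.2.2.1 y hy)

end

section
open Classical
variable {G : Type*} [Groupoid G] {A : G → Type*} [∀ e, Ring (A e)]
  (σ : ∀ e f : G, (e ⟶ f) → (A e →+* A f)) (α : ∀ e f g : G, (f ⟶ g) → (e ⟶ f) → A g)

lemma catMul_catSingle_apply {e f g : G} (t : f ⟶ e) (b : A e) (x : CP A) (m : f ⟶ g) :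
    catMul σ α x (catSingle ⟨f, e, t⟩ b) ⟨f, g, m⟩
      = x ⟨e, g, inv t ≫ m⟩ * σ e g (inv t ≫ m) b * α f e g (inv t ≫ m) t := by
  rw [catMul_catSingle_eq_sum, DFinsupp.sum_apply, DFinsupp.sum,
    Finset.sum_eq_single ⟨e, g, inv t ≫ m⟩]
  · dsimp only
    rw [dif_pos rfl, show (t ≫ eqToHom rfl) ≫ inv t ≫ m = m by simp, DFinsupp.single_eq_same]
    simp
  · rintro ⟨p1, p2, pm⟩ - hne
    dsimp only
    split_ifs with h
    · subst h
      refine DFinsupp.single_eq_of_ne fun heq => hne ?_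
      obtain ⟨rfl, hm⟩ := Sigma.mk.inj_iff.mp (eq_of_heq (Sigma.mk.inj_iff.mp heq).2)
      simp [eq_of_heq hm]
    · rfl
  · intro hp
    simp [DFinsupp.notMem_support_iff.mp hp]

lemma catMul_catSingle_apply_of_ne {e f : G} (t : f ⟶ e) (b : A e) (x : CP A) (r : CMor G)
    (hr : r.1 ≠ f) : catMul σ α x (catSingle ⟨f, e, t⟩ b) r = 0 := by
  rw [catMul_catSingle_eq_sum, DFinsupp.sum_apply, DFinsupp.sum]
  refine Finset.sum_eq_zero fun p _ => ?_
  dsimp only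
  split_ifs with h
  · exact DFinsupp.single_eq_of_ne fun heq => hr (congrArg Sigma.fst heq)
  · rfl

lemma catSingle_catMul_apply {e f g : G} (t : e ⟶ f) (a : A f) (y : CP A) (m : g ⟶ f) :
    catMul σ α (catSingle ⟨e, f, t⟩ a) y ⟨g, f, m⟩
      = a * σ e f t (y ⟨g, e, m ≫ inv t⟩) * α g e f t (m ≫ inv t) := by
  rw [catSingle_catMul_eq_sum, DFinsupp.sum_apply, DFinsupp.sum,
    Finset.sum_eq_single ⟨g, e, m ≫ inv t⟩]
  · dsimp only
    rw [dif_pos rfl, show ((m ≫ inv t) ≫ eqToHom rfl) ≫ t = m by simp, DFinsupp.single_eq_same]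
    simp
  · rintro ⟨q1, q2, qm⟩ - hne
    dsimp only
    split_ifs with h
    · subst h
      refine DFinsupp.single_eq_of_ne fun heq => hne ?_
      obtain ⟨rfl, hm⟩ := Sigma.mk.inj_iff.mp heq
      simp [(Sigma.mk.inj_iff.mp (eq_of_heq hm)).2 |> eq_of_heq]
    · rfl
  · intro hp
    simp [DFinsupp.notMem_support_iff.mp hp]

lemma catSingle_catMul_apply_of_ne {e f : G} (t : e ⟶ f) (a : A f) (y : CP A) (r : CMor G)
    (hr : r.2.1 ≠ f) : catMul σ α (catSingle ⟨e, f, t⟩ a) y r = 0 := by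
  rw [catSingle_catMul_eq_sum, DFinsupp.sum_apply, DFinsupp.sum]
  refine Finset.sum_eq_zero fun q _ => ?_
  dsimp only
  split_ifs with h
  · exact DFinsupp.single_eq_of_ne fun heq => hr (congrArg (fun r : CMor G => r.2.1) heq)
  · rfl

lemma catMul_catSingle_id_apply_eq_zero {e : G} (a : A e) {y : CP A} {r : CMor G}
    (hr : y r = 0) : catMul σ α y (catSingle ⟨e, e, 𝟙 e⟩ a) r = 0 := by
  obtain ⟨r1, r2, m⟩ := r
  by_cases h : r1 = e
  · subst h
    rw [catMul_catSingle_apply, IsIso.inv_id, Category.id_comp, hr, zero_mul, zero_mul]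
  · exact catMul_catSingle_apply_of_ne σ α _ a y _ h

lemma catSingle_id_catMul_apply_eq_zero {e : G} (a : A e) {y : CP A} {r : CMor G}
    (hr : y r = 0) : catMul σ α (catSingle ⟨e, e, 𝟙 e⟩ a) y r = 0 := by
  obtain ⟨r1, r2, m⟩ := r
  by_cases h : r2 = e
  · subst h
    rw [catSingle_catMul_apply, IsIso.inv_id, Category.comp_id, hr, map_zero, mul_zero, zero_mul]
  · exact catSingle_catMul_apply_of_ne σ α _ a y _ h
end

section
variable {G : Type*} [Groupoid G] {A : G → Type*} [∀ e, CommRing (A e)]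
  {σ : ∀ e f : G, (e ⟶ f) → (A e →+* A f)} {α : ∀ e f g : G, (f ⟶ g) → (e ⟶ f) → A g}

lemma catMul_catSingle_id_apply_id_comm (hσ1 : ∀ e : G, σ e e (𝟙 e) = RingHom.id (A e))
    (hα1r : ∀ (e f : G) (s : e ⟶ f), α e e f s (𝟙 e) = 1) (y : CP A) (e f : G) (a : A e) :
    catMul σ α y (catSingle ⟨e, e, 𝟙 e⟩ a) ⟨f, f, 𝟙 f⟩
      = catMul σ α (catSingle ⟨e, e, 𝟙 e⟩ a) y ⟨f, f, 𝟙 f⟩ := by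
  by_cases h : f = e
  · subst h
    rw [catMul_catSingle_apply, catSingle_catMul_apply, IsIso.inv_id, Category.id_comp, hσ1,
      hα1r, RingHom.id_apply, RingHom.id_apply, mul_comm (y _)]
  · rw [catMul_catSingle_apply_of_ne σ α _ a y _ h, catSingle_catMul_apply_of_ne σ α _ a y _ h]

open Classical in
lemma IsCrossedIdeal.commute_catSingle_id_of_forall_card_support_lt
    (hσ1 : ∀ e : G, σ e e (𝟙 e) = RingHom.id (A e))
    (hα1r : ∀ (e f : G) (s : e ⟶ f), α e e f s (𝟙 e) = 1)
    {I : Set (CP A)} (hI : IsCrossedIdeal σ α I) {y : CP A} (hyI : y ∈ I) {f : G}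
    (hyf : y ⟨f, f, 𝟙 f⟩ ≠ 0) (hmin : ∀ w ∈ I, w.support.card < y.support.card → w = 0)
    (e : G) (a : A e) :
    catMul σ α y (catSingle ⟨e, e, 𝟙 e⟩ a) = catMul σ α (catSingle ⟨e, e, 𝟙 e⟩ a) y := by
  set z := catMul σ α y (catSingle ⟨e, e, 𝟙 e⟩ a) - catMul σ α (catSingle ⟨e, e, 𝟙 e⟩ a) y
  have hz : z.support ⊆ y.support.erase ⟨f, f, 𝟙 f⟩ := by
    intro r hr
    rw [DFinsupp.mem_support_iff] at hr
    refine Finset.mem_erase.mpr ⟨?_, DFinsupp.mem_support_iff.mpr fun hyr => hr ?_⟩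
    · rintro rfl
      exact hr (sub_eq_zero.mpr (catMul_catSingle_id_apply_id_comm hσ1 hα1r y e f a))
    · rw [DFinsupp.sub_apply, catMul_catSingle_id_apply_eq_zero σ α a hyr,
        catSingle_id_catMul_apply_eq_zero σ α a hyr, sub_zero]
  have hlt : z.support.card < y.support.card :=
    (Finset.card_le_card hz).trans_lt
      (Finset.card_erase_lt_of_mem (DFinsupp.mem_support_iff.mpr hyf))
  exact sub_eq_zero.mp <|
    hmin z (hI.sub_mem (hI.mul_mem_right hyI _) (hI.mul_mem_left _ hyI)) hlt

end

theorem ideal_meets_coefficients_of_maximal_commutative_general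
    {G : Type*} [Groupoid G] {A : G → Type*} [∀ e, CommRing (A e)]
    (σ : ∀ e f : G, (e ⟶ f) → (A e →+* A f))
    (α : ∀ e f g : G, (f ⟶ g) → (e ⟶ f) → A g)
    (hσ1 : ∀ e : G, σ e e (𝟙 e) = RingHom.id (A e))
    (hα1r : ∀ (e f : G) (s : e ⟶ f), α e e f s (𝟙 e) = 1)
    (hreg : ∀ (e f : G) (s : e ⟶ f) (b : A f),
      (α f e f s (Groupoid.inv s) * b = 0 → b = 0) ∧
        (b * α f e f s (Groupoid.inv s) = 0 → b = 0))
    (hmax : ∀ x : CP A,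
      (∀ (e : G) (a : A e),
        catMul σ α x (catSingle (A := A) ⟨e, e, 𝟙 e⟩ a)
          = catMul σ α (catSingle (A := A) ⟨e, e, 𝟙 e⟩ a) x) →
      ∀ p : CMor G, (∀ e : G, p ≠ ⟨e, e, 𝟙 e⟩) → x p = 0) :
    ∀ I : Set (CP A), IsCrossedIdeal σ α I → (∃ x ∈ I, x ≠ 0) →
      ∃ x ∈ I, x ≠ 0 ∧ ∀ p : CMor G, (∀ e : G, p ≠ ⟨e, e, 𝟙 e⟩) → x p = 0 := by
  classical
  intro I hI hI0
  obtain ⟨x, hxI, hx0, hxmin⟩ := DFinsupp.exists_ne_zero_forall_card_support_lt hI0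
  obtain ⟨⟨e, f, s⟩, hs⟩ := DFinsupp.ne_iff.mp hx0
  set y := catMul σ α x (catSingle ⟨f, e, Groupoid.inv s⟩ 1)
  have hyf : y ⟨f, f, 𝟙 f⟩ ≠ 0 := by
    rw [catMul_catSingle_apply, Groupoid.inv_eq_inv, IsIso.inv_inv, Category.comp_id, map_one,
      mul_one, ← Groupoid.inv_eq_inv]
    exact fun h => hs ((hreg e f s _).2 h)
  have hymin : ∀ w ∈ I, w.support.card < y.support.card → w = 0 := fun w hwI hlt =>
    hxmin w hwI (hlt.trans_le (card_support_catMul_catSingle_le σ α x _ _))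
  refine ⟨y, hI.mul_mem_right hxI _, fun hy => hyf (by rw [hy]; rfl), hmax y ?_⟩
  exact hI.commute_catSingle_id_of_forall_card_support_lt hσ1 hα1r (hI.mul_mem_right hxI _) hyf
    hymin

/-- in a groupoid crossed product `A ⋊_α^σ G` (finitely many
objects, each `A_e` commutative, `A` maximal commutative, each `α(s, s⁻¹)` not
a zero divisor), every nonzero twosided ideal meets `A` nontrivially. -/
theorem ideal_meets_coefficients_of_maximal_commutative
    {G : Type*} [Groupoid G] [Finite G] {A : G → Type*} [∀ e, CommRing (A e)]
    (σ : ∀ e f : G, (e ⟶ f) → (A e →+* A f))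
    (α : ∀ e f g : G, (f ⟶ g) → (e ⟶ f) → A g)
    (hσ1 : ∀ e : G, σ e e (𝟙 e) = RingHom.id (A e))
    (hα1r : ∀ (e f : G) (s : e ⟶ f), α e e f s (𝟙 e) = 1)
    (hα1l : ∀ (e f : G) (s : e ⟶ f), α e f f (𝟙 f) s = 1)
    (hcoc : ∀ (e f g h : G) (s : g ⟶ h) (t : f ⟶ g) (r : e ⟶ f),
      α f g h s t * α e f h (t ≫ s) r = σ g h s (α e f g t r) * α e g h s (r ≫ t))
    (htw : ∀ (e f g : G) (s : f ⟶ g) (t : e ⟶ f) (a : A e),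
      σ f g s (σ e f t a) * α e f g s t = α e f g s t * σ e g (t ≫ s) a)
    (hreg : ∀ (e f : G) (s : e ⟶ f) (b : A f),
      (α f e f s (Groupoid.inv s) * b = 0 → b = 0) ∧
        (b * α f e f s (Groupoid.inv s) = 0 → b = 0))
    (hmax : ∀ x : CP A,
      (∀ (e : G) (a : A e),
        catMul σ α x (catSingle (A := A) ⟨e, e, 𝟙 e⟩ a)
          = catMul σ α (catSingle (A := A) ⟨e, e, 𝟙 e⟩ a) x) →
      ∀ p : CMor G, (∀ e : G, p ≠ ⟨e, e, 𝟙 e⟩) → x p = 0) :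
    ∀ I : Set (CP A), IsCrossedIdeal σ α I → (∃ x ∈ I, x ≠ 0) →
      ∃ x ∈ I, x ≠ 0 ∧ ∀ p : CMor G, (∀ e : G, p ≠ ⟨e, e, 𝟙 e⟩) → x p = 0 :=
  ideal_meets_coefficients_of_maximal_commutative_general σ α hσ1 hα1r hreg hmax
end

section
/- Let A ⋊_α^σ G be a category crossed product such that σ is a functor from G to the category of rings (i.e. σ_{st} = σ_s ∘ σ_t for composable pairs). Let R be a congruence relation on G such that {A, G/R, σ([·]), α([·],[·])} is a well-defined crossed system. If I is the twosided ideal of A ⋊_α^σ G generated by an element Σ_{s∈G} a_s u_s with a_s = 0 whenever s is not congruent to any identity morphism, and Σ_{s ∈ [e]} a_s = 0 for every object e, then A ∩ I = {0}. -/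
open CategoryTheory

/-!
The class sums `z ↦ ∑_{t ∈ [s]} z_t` are additive maps `A ⋊_α^σ G → A_{c(s)}` (the coefficients
of the canonical map to the crossed product over `G/R`). Their common kernel `K` is a twosided
ideal. Indeed, an additive map taking equal values on `a u_t` and `a u_{t'}` for congruent `t, t'`
vanishes on `K` (group the support by hom-sets, then by classes), and this invariance survives
composing with a left or right multiplication, because `σ` and `α` only see classes. The generator
lies in `K`, so `I ⊆ K`; an element of `A` lying in `K` has `z_{1_e}` equal to its class sum at
`1_e`, which is zero.
-/

theorem finsum_sigma {ι M : Type*} {κ : ι → Type*} [AddCommMonoid M] (f : (Σ i, κ i) → M)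
    (hf : (Function.support f).Finite) : ∑ᶠ p, f p = ∑ᶠ (i) (k), f ⟨i, k⟩ := by
  classical
  set s := hf.toFinset
  have hsupp : Function.support f ⊆
      ↑((s.image Sigma.fst).sigma fun i => s.preimage (Sigma.mk i) sigma_mk_injective.injOn) := by
    intro p hp
    simp only [Finset.coe_sigma, Set.mem_sigma_iff, Finset.coe_image, Finset.coe_preimage,
      Set.mem_image, Set.mem_preimage, Finset.mem_coe, s, Set.Finite.mem_toFinset]
    exact ⟨⟨p, hp, rfl⟩, hp⟩
  rw [finsum_eq_sum_of_support_subset f hsupp, Finset.sum_sigma,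
    finsum_eq_sum_of_support_subset (s := s.image Sigma.fst)]
  · refine Finset.sum_congr rfl fun i _ => (finsum_eq_sum_of_support_subset _ ?_).symm
    intro k hk
    simpa [s] using hk
  · intro i hi
    obtain ⟨k, hk⟩ : ∃ k, f ⟨i, k⟩ ≠ 0 := by
      by_contra! h
      exact hi (finsum_eq_zero_of_forall_eq_zero h)
    simpa [s] using ⟨k, hk⟩

theorem finsum_eq_zero_of_classSum_eq_zero {H M N : Type*} [AddCommMonoid M] [AddCommMonoid N]
    (S : Setoid H) (F : H → M →+ N) (hF : ∀ t t', S t t' → F t = F t') (b : H → M)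
    (hb : (Function.support b).Finite) (hsum : ∀ s, ∑ᶠ (t) (_ : S t s), b t = 0) :
    ∑ᶠ t, F t (b t) = 0 := by
  have hfin : (Function.support fun t => F t (b t)).Finite :=
    hb.subset fun t ht h0 => ht (by simp [h0])
  rw [← finsum_comp_equiv (Equiv.sigmaFiberEquiv (Quotient.mk S)),
    finsum_sigma _ (hfin.preimage (Equiv.injective _).injOn)]
  refine finsum_eq_zero_of_forall_eq_zero fun c => ?_
  induction c using Quotient.inductionOn with | h s => ?_
  have hfiber : ∀ t : {t // ⟦t⟧ = ⟦s⟧}, F t (b t) = F s (b t) :=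
    fun t => by rw [hF _ _ (Quotient.exact t.2)]
  simp only [Equiv.sigmaFiberEquiv_apply]
  rw [finsum_congr hfiber, ← map_finsum (F s) (hb.preimage Subtype.val_injective.injOn),
    finsum_subtype_eq_finsum_cond]
  simp only [Quotient.eq]
  rw [hsum s, map_zero]

theorem DFinsupp.map_eq_finsum_single {ι M : Type*} {β : ι → Type*} [DecidableEq ι]
    [∀ i, AddCommMonoid (β i)] [AddCommMonoid M] (L : (Π₀ i, β i) →+ M) (z : Π₀ i, β i) :
    L z = ∑ᶠ i, L (single i (z i)) := by
  classical
  have hL : L = sumAddHom fun i => L.comp (singleAddHom β i) :=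
    addHom_ext fun i y => by simp
  conv_lhs => rw [hL, sumAddHom_apply]
  refine (finsum_eq_sum_of_support_subset _ fun i hi => ?_).symm
  simp only [Finset.mem_coe, mem_support_iff]
  rintro h0
  simp [h0] at hi

namespace CategoryCrossedProduct

variable {G : Type*} [Category G] {A : G → Type*} [∀ e, Ring (A e)]
  (σ : ∀ e f : G, (e ⟶ f) → (A e →+* A f)) (α : ∀ e f g : G, (f ⟶ g) → (e ⟶ f) → A g)

lemma catMul_single_single {e e₁ f : G} (p : e₁ ⟶ f) (q : e ⟶ e₁) (a : A f) (b : A e₁) :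
    catMul σ α (catSingle ⟨e₁, f, p⟩ a) (catSingle ⟨e, e₁, q⟩ b) =
      catSingle ⟨e, f, q ≫ p⟩ (a * σ e₁ f p b * α e e₁ f p q) := by
  classical
  unfold catMul catSingle
  rw [DFinsupp.sum_single_index, DFinsupp.sum_single_index]
  · rw [dif_pos rfl, eqToHom_refl, Category.comp_id]
    rfl
  · simp
  · rw [DFinsupp.sum_single_index] <;> simp

lemma catMul_single_single_of_ne {e e₁ e₁' f : G} (p : e₁ ⟶ f) (q : e ⟶ e₁') (a : A f)
    (b : A e₁') (h : e₁' ≠ e₁) :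
    catMul σ α (catSingle ⟨e₁, f, p⟩ a) (catSingle ⟨e, e₁', q⟩ b) = 0 := by
  classical
  unfold catMul catSingle
  rw [DFinsupp.sum_single_index, DFinsupp.sum_single_index]
  · simp [h]
  · simp
  · rw [DFinsupp.sum_single_index] <;> simp

lemma catMul_add_left (x x' y : CP A) :
    catMul σ α (x + x') y = catMul σ α x y + catMul σ α x' y := by
  classical
  unfold catMul
  refine DFinsupp.sum_add_index (fun p => ?_) fun p a a' => ?_
  · exact DFinsupp.sum_eq_zero fun q => by split_ifs <;> simp
  · rw [← DFinsupp.sum_add]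
    refine Finset.sum_congr rfl fun q _ => ?_
    dsimp only
    split_ifs <;> simp [add_mul]

lemma catMul_add_right (x y y' : CP A) :
    catMul σ α x (y + y') = catMul σ α x y + catMul σ α x y' := by
  classical
  unfold catMul
  rw [← DFinsupp.sum_add]
  refine Finset.sum_congr rfl fun p _ => ?_
  refine DFinsupp.sum_add_index (fun q => ?_) fun q b b' => ?_
  · split_ifs <;> simp
  · split_ifs <;> simp [mul_add, add_mul]

noncomputable def catMulLeft (x : CP A) : CP A →+ CP A :=
  AddMonoidHom.mk' (catMul σ α x) (catMul_add_right σ α x)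

noncomputable def catMulRight (x : CP A) : CP A →+ CP A :=
  AddMonoidHom.mk' (fun z => catMul σ α z x) fun z z' => catMul_add_left σ α z z' x

lemma finite_support_coeff_hom (z : CP A) (a b : G) :
    (Function.support (M := A b) fun t : a ⟶ b => z ⟨a, b, t⟩).Finite :=
by
  classical
  refine (z.support.finite_toSet.preimage (f := fun t : a ⟶ b => (⟨a, b, t⟩ : CMor G))
    (fun t _ t' _ h => by simpa using h)).subset fun t ht => by simpa using ht

variable (r : HomRel G)

def IsHomRelInvariant {M : Type*} [AddCommMonoid M] (L : CP A →+ M) : Prop :=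
  ∀ ⦃a b : G⦄ (t t' : a ⟶ b) (m : A b), r t t' →
    L (catSingle ⟨a, b, t⟩ m) = L (catSingle ⟨a, b, t'⟩ m)

noncomputable def classSum (a b : G) (s : a ⟶ b) : CP A →+ A b where
  toFun z := ∑ᶠ (t) (_ : r t s), z ⟨a, b, t⟩
  map_zero' := by simp
  map_add' z w := finsum_mem_add_distrib' ((finite_support_coeff_hom z a b).inter_of_right _)
    ((finite_support_coeff_hom w a b).inter_of_right _)

lemma classSum_apply (a b : G) (s : a ⟶ b) (z : CP A) :
    classSum r a b s z = ∑ᶠ (t) (_ : r t s), z ⟨a, b, t⟩ := rfl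

open Classical in
lemma classSum_single {a b : G} (s t : a ⟶ b) (m : A b) :
    classSum r a b s (catSingle ⟨a, b, t⟩ m) = if r t s then m else 0 := by
  rw [classSum_apply, finsum_eq_single _ t fun t' ht' => ?_]
  · rw [finsum_eq_if]
    exact if_congr Iff.rfl (DFinsupp.single_eq_same) rfl
  · rw [catSingle, DFinsupp.single_eq_of_ne (by simpa using ht')]
    simp

lemma classSum_single_of_ne {a b : G} (s : a ⟶ b) (p : CMor G) (m : A p.2.1)
    (hp : ∀ t : a ⟶ b, p ≠ ⟨a, b, t⟩) : classSum r a b s (catSingle p m) = 0 :=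
  finsum_eq_zero_of_forall_eq_zero fun t => by
    classical
    rw [catSingle, DFinsupp.single_eq_of_ne (hp t).symm]
    simp

lemma isHomRelInvariant_classSum [Congruence r] (a b : G) (s : a ⟶ b) :
    IsHomRelInvariant r (classSum (A := A) r a b s) := by
  intro a' b' t t' m h
  rcases eq_or_ne a' a with rfl | ha
  · rcases eq_or_ne b' b with rfl | hb
    · classical
      have hr := Congruence.equivalence (r := r) (X := a') (Y := b')
      rw [classSum_single, classSum_single]
      exact if_congr ⟨hr.trans (hr.symm h), hr.trans h⟩ rfl rfl
    · rw [classSum_single_of_ne _ _ _ _ fun _ h => hb (congrArg (·.2.1) h),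
        classSum_single_of_ne _ _ _ _ fun _ h => hb (congrArg (·.2.1) h)]
  · rw [classSum_single_of_ne _ _ _ _ fun _ h => ha (congrArg (·.1) h),
      classSum_single_of_ne _ _ _ _ fun _ h => ha (congrArg (·.1) h)]

lemma IsHomRelInvariant.map_eq_zero [Congruence r] {M : Type*} [AddCommMonoid M]
    {L : CP A →+ M} (hL : IsHomRelInvariant r L) {z : CP A}
    (hz : ∀ (a b : G) (s : a ⟶ b), classSum r a b s z = 0) : L z = 0 := by
  classical
  have hfin : (Function.support fun p => L (DFinsupp.single p (z p))).Finite :=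
    z.support.finite_toSet.subset fun p hp => by
      simpa using fun h0 : z p = 0 => hp (by simp [h0])
  rw [DFinsupp.map_eq_finsum_single, finsum_sigma _ hfin]
  refine finsum_eq_zero_of_forall_eq_zero fun a => ?_
  rw [finsum_sigma _ (hfin.preimage sigma_mk_injective.injOn)]
  refine finsum_eq_zero_of_forall_eq_zero fun b => ?_
  exact finsum_eq_zero_of_classSum_eq_zero (⟨@r a b, Congruence.equivalence⟩ : Setoid (a ⟶ b))
    (fun t => L.comp (DFinsupp.singleAddHom (fun p : CMor G => A p.2.1) ⟨a, b, t⟩))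
    (fun t t' h => AddMonoidHom.ext fun m => hL t t' m h) _ (finite_support_coeff_hom z a b)
    (hz a b)

section Multiplication

variable {r} [Congruence r] {M : Type*} [AddCommMonoid M] {L : CP A →+ M}

lemma IsHomRelInvariant.comp_catMulLeft
    (hα : ∀ (e f g : G) (s s' : f ⟶ g) (t t' : e ⟶ f), r s s' → r t t' →
      α e f g s t = α e f g s' t')
    (hL : IsHomRelInvariant r L) (x : CP A) :
    IsHomRelInvariant r (L.comp (catMulLeft σ α x)) := by
  intro a b t t' m h
  suffices L.comp (catMulRight σ α (catSingle ⟨a, b, t⟩ m)) =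
      L.comp (catMulRight σ α (catSingle ⟨a, b, t'⟩ m)) from DFunLike.congr_fun this x
  classical
  refine DFinsupp.addHom_ext fun ⟨e₁, f, p⟩ n => ?_
  change L (catMul σ α (catSingle ⟨e₁, f, p⟩ n) (catSingle ⟨a, b, t⟩ m)) =
    L (catMul σ α (catSingle ⟨e₁, f, p⟩ n) (catSingle ⟨a, b, t'⟩ m))
  rcases eq_or_ne b e₁ with rfl | hb
  · rw [catMul_single_single, catMul_single_single,
      hα _ _ _ p p t t' (Congruence.equivalence.refl p) h]
    exact hL _ _ _ (HomRel.comp_right p h)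
  · rw [catMul_single_single_of_ne _ _ _ _ _ _ hb, catMul_single_single_of_ne _ _ _ _ _ _ hb]

lemma IsHomRelInvariant.comp_catMulRight
    (hσ : ∀ (e f : G) (s t : e ⟶ f), r s t → σ e f s = σ e f t)
    (hα : ∀ (e f g : G) (s s' : f ⟶ g) (t t' : e ⟶ f), r s s' → r t t' →
      α e f g s t = α e f g s' t')
    (hL : IsHomRelInvariant r L) (x : CP A) :
    IsHomRelInvariant r (L.comp (catMulRight σ α x)) := by
  intro a b t t' m h
  suffices L.comp (catMulLeft σ α (catSingle ⟨a, b, t⟩ m)) =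
      L.comp (catMulLeft σ α (catSingle ⟨a, b, t'⟩ m)) from DFunLike.congr_fun this x
  classical
  refine DFinsupp.addHom_ext fun ⟨e, e₁, q⟩ n => ?_
  change L (catMul σ α (catSingle ⟨a, b, t⟩ m) (catSingle ⟨e, e₁, q⟩ n)) =
    L (catMul σ α (catSingle ⟨a, b, t'⟩ m) (catSingle ⟨e, e₁, q⟩ n))
  rcases eq_or_ne e₁ a with rfl | ha
  · rw [catMul_single_single, catMul_single_single, hσ _ _ t t' h,
      hα _ _ _ t t' q q h (Congruence.equivalence.refl q)]
    exact hL _ _ _ (HomRel.comp_left q h)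
  · rw [catMul_single_single_of_ne _ _ _ _ _ _ ha, catMul_single_single_of_ne _ _ _ _ _ _ ha]

end Multiplication

section Kernel

variable {r} [Congruence r]

lemma classSum_congr {a b : G} {s s' : a ⟶ b} (h : r s s') :
    classSum (A := A) r a b s = classSum r a b s' := by
  classical
  have hr := Congruence.equivalence (r := r) (X := a) (Y := b)
  ext z
  refine finsum_congr fun t => ?_
  rw [finsum_eq_if, finsum_eq_if]
  exact if_congr ⟨fun ht => hr.trans ht h, fun ht => hr.trans ht (hr.symm h)⟩ rfl rfl

lemma classSum_eq_apply {a b : G} (s : a ⟶ b) {z : CP A}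
    (hz : ∀ t : a ⟶ b, t ≠ s → z ⟨a, b, t⟩ = 0) : classSum r a b s z = z ⟨a, b, s⟩ := by
  classical
  rw [classSum_apply, finsum_eq_single _ s fun t ht => by simp [hz t ht], finsum_eq_if,
    if_pos (Congruence.equivalence.refl s)]

variable (r) in
def classSumKernel : Set (CP A) := {z | ∀ (a b : G) (s : a ⟶ b), classSum r a b s z = 0}

lemma isCrossedIdeal_classSumKernel
    (hσ : ∀ (e f : G) (s t : e ⟶ f), r s t → σ e f s = σ e f t)
    (hα : ∀ (e f g : G) (s s' : f ⟶ g) (t t' : e ⟶ f), r s s' → r t t' →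
      α e f g s t = α e f g s' t') :
    IsCrossedIdeal σ α (classSumKernel (A := A) r) :=
  ⟨fun a b s => map_zero _,
    fun z w hz hw a b s => by rw [map_add, hz, hw, add_zero],
    fun z hz a b s => by rw [map_neg, hz, neg_zero],
    fun z x hz => ⟨fun a b s =>
      ((isHomRelInvariant_classSum r a b s).comp_catMulLeft σ α hα x).map_eq_zero r hz,
      fun a b s =>
      ((isHomRelInvariant_classSum r a b s).comp_catMulRight σ α hσ hα x).map_eq_zero r hz⟩⟩

lemma mem_classSumKernel_of_classSum_id_eq_zero {x : CP A}
    (hsupp : ∀ p : CMor G, x p ≠ 0 → ∃ h : p.1 = p.2.1, r (p.2.2 ≫ eqToHom h.symm) (𝟙 p.1))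
    (hsum : ∀ e : G, classSum r e e (𝟙 e) x = 0) : x ∈ classSumKernel r := by
  intro a b s
  by_cases hs : ∀ t, r t s → x ⟨a, b, t⟩ = 0
  · exact finsum_mem_eq_zero_of_forall_eq_zero (s := {t | r t s}) hs
  push Not at hs
  obtain ⟨t, hts, hx⟩ := hs
  obtain ⟨hab, ht⟩ := hsupp _ hx
  dsimp only at hab ht
  subst hab
  simp only [eqToHom_refl, Category.comp_id] at ht
  have hr := Congruence.equivalence (r := r) (X := a) (Y := a)
  rw [classSum_congr (hr.trans (hr.symm hts) ht), hsum]

lemma eq_zero_of_mem_classSumKernel {z : CP A} (hz : z ∈ classSumKernel r)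
    (hid : ∀ p : CMor G, (∀ e : G, p ≠ ⟨e, e, 𝟙 e⟩) → z p = 0) : z = 0 := by
  ext ⟨a, b, t⟩
  by_cases hp : ∀ e : G, (⟨a, b, t⟩ : CMor G) ≠ ⟨e, e, 𝟙 e⟩
  · exact hid _ hp
  push Not at hp
  obtain ⟨e, he⟩ := hp
  cases he
  rw [← classSum_eq_apply (r := r) _ fun t ht => hid _ fun e' he' => ?_, hz, DFinsupp.zero_apply]
  cases he'
  exact ht rfl

end Kernel

end CategoryCrossedProduct

theorem generated_ideal_trivial_coefficient_intersection_general
    {G : Type*} [Category G] {A : G → Type*} [∀ e, Ring (A e)]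
    (σ : ∀ e f : G, (e ⟶ f) → (A e →+* A f))
    (α : ∀ e f g : G, (f ⟶ g) → (e ⟶ f) → A g)
    (R : ∀ e f : G, (e ⟶ f) → (e ⟶ f) → Prop)
    (hRrefl : ∀ (e f : G) (s : e ⟶ f), R e f s s)
    (hRsymm : ∀ (e f : G) (s t : e ⟶ f), R e f s t → R e f t s)
    (hRtrans : ∀ (e f : G) (s t r : e ⟶ f), R e f s t → R e f t r → R e f s r)
    (hRcomp : ∀ (e f g : G) (s s' : e ⟶ f) (t t' : f ⟶ g),
      R e f s s' → R f g t t' → R e g (s ≫ t) (s' ≫ t'))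
    (hσR : ∀ (e f : G) (s t : e ⟶ f), R e f s t → σ e f s = σ e f t)
    (hαR : ∀ (e f g : G) (s s' : f ⟶ g) (t t' : e ⟶ f),
      R f g s s' → R e f t t' → α e f g s t = α e f g s' t')
    (I : Set (CP A)) (x : CP A)
    (hImin : ∀ J : Set (CP A), IsCrossedIdeal σ α J → x ∈ J → I ⊆ J)
    (hsupp : ∀ p : CMor G, x p ≠ 0 →
      ∃ h : p.1 = p.2.1, R p.1 p.1 (p.2.2 ≫ eqToHom h.symm) (𝟙 p.1))
    (hsum : ∀ e : G, (∑ᶠ (s : e ⟶ e) (_ : R e e s (𝟙 e)), x ⟨e, e, s⟩) = 0) :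
    ∀ y ∈ I, (∀ p : CMor G, (∀ e : G, p ≠ ⟨e, e, 𝟙 e⟩) → y p = 0) → y = 0 := by
  intro y hyI hy
  let r : HomRel G := fun e f => R e f
  have : Congruence r :=
    { equivalence := ⟨hRrefl _ _, hRsymm _ _ _ _, hRtrans _ _ _ _ _⟩
      comp_left := fun f _ _ h => hRcomp _ _ _ _ _ _ _ (hRrefl _ _ f) h
      comp_right := fun g h => hRcomp _ _ _ _ _ _ _ h (hRrefl _ _ g) }
  have hxK : x ∈ CategoryCrossedProduct.classSumKernel r :=
    CategoryCrossedProduct.mem_classSumKernel_of_classSum_id_eq_zero hsupp hsum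
  have hIK : I ⊆ CategoryCrossedProduct.classSumKernel r :=
    hImin _ (CategoryCrossedProduct.isCrossedIdeal_classSumKernel σ α hσR hαR) hxK
  exact CategoryCrossedProduct.eq_zero_of_mem_classSumKernel (hIK hyI) hy

/-- suppose `σ` is a functor and `R` is a congruence relation on
`G` such that `σ` and `α` descend to the quotient category `G/R` (giving a
crossed system on `G/R`). If `I` is the twosided ideal of `A ⋊_α^σ G` generated
by an element `Σ a_s u_s` with `a_s = 0` whenever `s` is not congruent to an
identity morphism, and `Σ_{s ∈ [e]} a_s = 0` for every object `e`, then
`A ∩ I = {0}`. -/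
theorem generated_ideal_trivial_coefficient_intersection
    {G : Type*} [Category G] [Finite G] {A : G → Type*} [∀ e, Ring (A e)]
    (σ : ∀ e f : G, (e ⟶ f) → (A e →+* A f))
    (α : ∀ e f g : G, (f ⟶ g) → (e ⟶ f) → A g)
    (hσ1 : ∀ e : G, σ e e (𝟙 e) = RingHom.id (A e))
    (hα1r : ∀ (e f : G) (s : e ⟶ f), α e e f s (𝟙 e) = 1)
    (hα1l : ∀ (e f : G) (s : e ⟶ f), α e f f (𝟙 f) s = 1)
    (hcoc : ∀ (e f g h : G) (s : g ⟶ h) (t : f ⟶ g) (r : e ⟶ f),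
      α f g h s t * α e f h (t ≫ s) r = σ g h s (α e f g t r) * α e g h s (r ≫ t))
    (htw : ∀ (e f g : G) (s : f ⟶ g) (t : e ⟶ f) (a : A e),
      σ f g s (σ e f t a) * α e f g s t = α e f g s t * σ e g (t ≫ s) a)
    (hσcomp : ∀ (e f g : G) (s : e ⟶ f) (t : f ⟶ g),
      σ e g (s ≫ t) = (σ f g t).comp (σ e f s))
    (R : ∀ e f : G, (e ⟶ f) → (e ⟶ f) → Prop)
    (hRrefl : ∀ (e f : G) (s : e ⟶ f), R e f s s)
    (hRsymm : ∀ (e f : G) (s t : e ⟶ f), R e f s t → R e f t s)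
    (hRtrans : ∀ (e f : G) (s t r : e ⟶ f), R e f s t → R e f t r → R e f s r)
    (hRcomp : ∀ (e f g : G) (s s' : e ⟶ f) (t t' : f ⟶ g),
      R e f s s' → R f g t t' → R e g (s ≫ t) (s' ≫ t'))
    (hσR : ∀ (e f : G) (s t : e ⟶ f), R e f s t → σ e f s = σ e f t)
    (hαR : ∀ (e f g : G) (s s' : f ⟶ g) (t t' : e ⟶ f),
      R f g s s' → R e f t t' → α e f g s t = α e f g s' t')
    (I : Set (CP A)) (x : CP A)
    (hI : IsCrossedIdeal σ α I) (hxI : x ∈ I)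
    (hImin : ∀ J : Set (CP A), IsCrossedIdeal σ α J → x ∈ J → I ⊆ J)
    (hsupp : ∀ p : CMor G, x p ≠ 0 →
      ∃ h : p.1 = p.2.1, R p.1 p.1 (p.2.2 ≫ eqToHom h.symm) (𝟙 p.1))
    (hsum : ∀ e : G, (∑ᶠ (s : e ⟶ e) (_ : R e e s (𝟙 e)), x ⟨e, e, s⟩) = 0) :
    ∀ y ∈ I, (∀ p : CMor G, (∀ e : G, p ≠ ⟨e, e, 𝟙 e⟩) → y p = 0) → y = 0 :=
  generated_ideal_trivial_coefficient_intersection_general σ α R hRrefl hRsymm hRtrans hRcomp hσR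
    hαR I x hImin hsupp hsum
end
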